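/- If p is an odd prime with p ≡ 2 (mod 9) or p ≡ 5 (mod 9), then p is not a sum of two rational cubes; equivalently, the elliptic curve y² = x³ − 432·p² has Mordell–Weil rank 0 over ℚ. -/

import Mathlib

/-- Eisenstein integers `a + b ω` where `ω` is a primitive cube root of unity. -/
@[ext] structure Eis where
  re : ℤ
  im : ℤ
deriving DecidableEq

namespace Eis

instance : Zero Eis := ⟨⟨0, 0⟩⟩
instance : One Eis := ⟨⟨1, 0⟩⟩
instance : Add Eis := ⟨fun x y => ⟨x.re + y.re, x.im + y.im⟩⟩
instance : Neg Eis := ⟨fun x => ⟨-x.re, -x.im⟩⟩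
instance : Mul Eis := ⟨fun x y =>
  ⟨x.re * y.re - x.im * y.im, x.re * y.im + x.im * y.re - x.im * y.im⟩⟩

@[simp] lemma zero_re : (0 : Eis).re = 0 := rfl
@[simp] lemma zero_im : (0 : Eis).im = 0 := rfl
@[simp] lemma one_re : (1 : Eis).re = 1 := rfl
@[simp] lemma one_im : (1 : Eis).im = 0 := rfl
@[simp] lemma add_re (x y : Eis) : (x + y).re = x.re + y.re := rfl
@[simp] lemma add_im (x y : Eis) : (x + y).im = x.im + y.im := rfl
@[simp] lemma neg_re (x : Eis) : (-x).re = -x.re := rfl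
@[simp] lemma neg_im (x : Eis) : (-x).im = -x.im := rfl
@[simp] lemma mul_re (x y : Eis) : (x * y).re = x.re * y.re - x.im * y.im := rfl
@[simp] lemma mul_im (x y : Eis) : (x * y).im = x.re * y.im + x.im * y.re - x.im * y.im := rfl

instance : NatCast Eis := ⟨fun n => ⟨n, 0⟩⟩
instance : IntCast Eis := ⟨fun n => ⟨n, 0⟩⟩
@[simp] lemma natCast_re (n : ℕ) : (n : Eis).re = n := rfl
@[simp] lemma natCast_im (n : ℕ) : (n : Eis).im = 0 := rfl
@[simp] lemma intCast_re (n : ℤ) : (n : Eis).re = n := rfl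
@[simp] lemma intCast_im (n : ℤ) : (n : Eis).im = 0 := rfl

instance commRing : CommRing Eis where
  add := (· + ·)
  add_assoc := by intros; ext <;> simp <;> ring
  zero := 0
  zero_add := by intros; ext <;> simp
  add_zero := by intros; ext <;> simp
  add_comm := by intros; ext <;> simp <;> ring
  mul := (· * ·)
  mul_assoc := by intros; ext <;> simp <;> ring
  one := 1
  one_mul := by intros; ext <;> simp
  mul_one := by intros; ext <;> simp
  left_distrib := by intros; ext <;> simp <;> ring
  right_distrib := by intros; ext <;> simp <;> ring
  mul_comm := by intros; ext <;> simp <;> ring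
  neg := Neg.neg
  neg_add_cancel := by intros; ext <;> simp
  zero_mul := by intros; ext <;> simp
  mul_zero := by intros; ext <;> simp
  nsmul := nsmulRec
  zsmul := zsmulRec
  natCast := fun n => ⟨n, 0⟩
  natCast_zero := by ext <;> simp
  natCast_succ := by intros; ext <;> simp
  intCast := fun n => ⟨n, 0⟩
  intCast_ofNat := by intros; ext <;> simp
  intCast_negSucc := by intros; ext <;> simp [Int.negSucc_eq] <;> ring


/-- the primitive cube root of unity -/
def ω : Eis := ⟨0, 1⟩
/-- `λ = ω - 1`, the prime above 3 -/
def lam : Eis := ⟨-1, 1⟩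
/-- the conjugate -/
def conj (x : Eis) : Eis := ⟨x.re - x.im, -x.im⟩
/-- the norm -/
def nrm (x : Eis) : ℤ := x.re ^ 2 - x.re * x.im + x.im ^ 2
/-- the natural-number norm -/
def nn (x : Eis) : ℕ := (nrm x).toNat

@[simp] lemma omega_re : ω.re = 0 := rfl
@[simp] lemma omega_im : ω.im = 1 := rfl
@[simp] lemma lam_re : lam.re = -1 := rfl
@[simp] lemma lam_im : lam.im = 1 := rfl

lemma hω : ω ^ 2 = -1 - ω := by ext <;> simp [pow_succ] <;> rfl
lemma hω3 : ω ^ 3 = 1 := by ext <;> simp [pow_succ] <;> rfl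
lemma lam_def : lam = ω - 1 := by ext <;> simp [lam, ω] <;> rfl

lemma nrm_nonneg (x : Eis) : 0 ≤ nrm x := by have := sq_nonneg (2 * x.re - x.im); have := sq_nonneg x.im; simp [nrm] at *; nlinarith
lemma nrm_mul (x y : Eis) : nrm (x * y) = nrm x * nrm y := by simp [nrm]; ring
lemma nrm_eq_zero_iff {x : Eis} : nrm x = 0 ↔ x = 0 := by
  constructor
  · intro h
    have h4 : (2 * x.re - x.im) ^ 2 + 3 * x.im ^ 2 = 0 := by simp [nrm] at h; nlinarith
    have h1 : x.im = 0 := by nlinarith [sq_nonneg (2 * x.re - x.im), sq_nonneg x.im]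
    have h2 : x.re = 0 := by nlinarith [sq_nonneg x.re]
    ext <;> simp [h1, h2]
  · rintro rfl; simp [nrm]

lemma mul_conj (x : Eis) : x * conj x = ⟨nrm x, 0⟩ := by ext <;> simp [conj, nrm] <;> ring
lemma nrm_one : nrm 1 = 1 := by simp [nrm]

instance : Nontrivial Eis := ⟨⟨0, 1, fun h => by simpa using congrArg Eis.re h⟩⟩

instance : NoZeroDivisors Eis := by
  constructor
  intro a b hab
  by_contra h
  push_neg at h
  have ha := h.1; have hb := h.2
  have : nrm a * nrm b = 0 := by rw [← nrm_mul, hab]; simp [nrm]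
  rcases mul_eq_zero.mp this with h' | h' <;>
    [exact ha (nrm_eq_zero_iff.mp h'); exact hb (nrm_eq_zero_iff.mp h')]

instance : IsDomain Eis := NoZeroDivisors.to_isDomain _

lemma nrm_dvd {x y : Eis} (h : x ∣ y) : nrm x ∣ nrm y := by
  obtain ⟨z, rfl⟩ := h; rw [nrm_mul]; exact dvd_mul_right _ _

lemma isUnit_iff_nrm {x : Eis} : IsUnit x ↔ nrm x = 1 := by
  constructor
  · intro h
    have h1 : x ∣ 1 := h.dvd
    have h2 := nrm_dvd h1
    rw [nrm_one] at h2
    have h3 := Int.isUnit_iff.mp (isUnit_of_dvd_one h2)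
    have h4 := nrm_nonneg x
    omega
  · intro h
    exact IsUnit.of_mul_eq_one (conj x) (by rw [mul_conj, h]; rfl)

lemma nrm_intCast (n : ℤ) : nrm (n : Eis) = n ^ 2 := by simp [nrm]

lemma intCast_dvd_iff (n : ℤ) (x : Eis) : (n : Eis) ∣ x ↔ n ∣ x.re ∧ n ∣ x.im := by
  constructor
  · rintro ⟨y, rfl⟩
    constructor
    · exact ⟨y.re, by simp⟩
    · exact ⟨y.im, by simp⟩
  · rintro ⟨⟨c, hc⟩, ⟨d, hd⟩⟩
    exact ⟨⟨c, d⟩, by ext <;> simp [hc, hd]⟩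

lemma intCast_injective : Function.Injective (fun n : ℤ => (n : Eis)) := by
  intro m n h; simpa using congrArg Eis.re h


lemma round_div (x n : ℤ) (hn : 0 < n) : ∃ q r, x = q * n + r ∧ -n ≤ 2 * r ∧ 2 * r ≤ n := by
  have h1 := Int.emod_add_mul_ediv x n
  have h2 := Int.emod_nonneg x (by omega : n ≠ 0)
  have h3 := Int.emod_lt_of_pos x hn
  by_cases h : 2 * (x % n) ≤ n
  · exact ⟨x / n, x % n, by linear_combination (-1 : ℤ) * h1, by omega, h⟩
  · exact ⟨x / n + 1, x % n - n, by linear_combination (-1 : ℤ) * h1, by omega, by omega⟩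

@[simp] lemma sub_re (x y : Eis) : (x - y).re = x.re - y.re := by
  show (x + -y).re = _; simp; ring
@[simp] lemma sub_im (x y : Eis) : (x - y).im = x.im - y.im := by
  show (x + -y).im = _; simp; ring

lemma nrm_conj (x : Eis) : nrm (conj x) = nrm x := by simp [nrm, conj]; ring

lemma nrm_pos {b : Eis} (hb : b ≠ 0) : 0 < nrm b := by
  have h1 := nrm_nonneg b
  have h2 : nrm b ≠ 0 := fun h => hb (nrm_eq_zero_iff.mp h)
  omega

lemma exists_div (a b : Eis) (hb : b ≠ 0) : ∃ q, nrm (a - q * b) < nrm b := by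
  have hn : 0 < nrm b := nrm_pos hb
  obtain ⟨q₁, r₁, hx, hr₁, hr₁'⟩ := round_div (a * conj b).re (nrm b) hn
  obtain ⟨q₂, r₂, hy, hr₂, hr₂'⟩ := round_div (a * conj b).im (nrm b) hn
  refine ⟨⟨q₁, q₂⟩, ?_⟩
  have key : (a - ⟨q₁, q₂⟩ * b) * conj b = ⟨r₁, r₂⟩ := by
    have hbc := mul_conj b
    have : (⟨q₁, q₂⟩ : Eis) * (b * conj b) = ⟨q₁ * nrm b, q₂ * nrm b⟩ := by
      rw [hbc]; ext <;> simp
    calc (a - ⟨q₁, q₂⟩ * b) * conj b = a * conj b - ⟨q₁, q₂⟩ * (b * conj b) := by ring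
    _ = ⟨r₁, r₂⟩ := by rw [this]; ext <;> simp at hx hy ⊢ <;> omega
  have h2 : nrm (a - ⟨q₁, q₂⟩ * b) * nrm b = r₁ ^ 2 - r₁ * r₂ + r₂ ^ 2 := by
    rw [← nrm_conj b, ← nrm_mul, key]; simp [nrm]
  have h3 : 4 * (r₁ ^ 2 - r₁ * r₂ + r₂ ^ 2) ≤ 3 * nrm b ^ 2 := by nlinarith
  have h4 := nrm_nonneg (a - ⟨q₁, q₂⟩ * b)
  nlinarith

instance : IsPrincipalIdealRing Eis := by
  constructor
  intro I
  by_cases hI : I = ⊥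
  · exact ⟨0, by rw [hI, eq_comm]; simp⟩
  · have hex : ∃ n : ℕ, ∃ b ∈ I, b ≠ 0 ∧ nn b = n := by
      obtain ⟨b, hbI, hb0⟩ := Submodule.exists_mem_ne_zero_of_ne_bot hI
      exact ⟨nn b, b, hbI, hb0, rfl⟩
    classical
    obtain ⟨b, hbI, hb0, hbn⟩ := Nat.find_spec hex
    refine ⟨b, le_antisymm ?_ ?_⟩
    · intro a haI
      obtain ⟨q, hq⟩ := exists_div a b hb0
      have hrI : a - q * b ∈ I := I.sub_mem haI (I.smul_mem q hbI)
      by_cases hr0 : a - q * b = 0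
      · have : a = q * b := by rw [← sub_eq_zero]; exact hr0
        rw [this]
        exact Submodule.mem_span_singleton.mpr ⟨q, rfl⟩
      · exfalso
        have hlt : nn (a - q * b) < nn b := by
          have := nrm_nonneg (a - q * b); have := nrm_nonneg b
          simp only [nn]; omega
        have := Nat.find_min hex (hbn ▸ hlt) ⟨a - q * b, hrI, hr0, rfl⟩
        exact this
    · rw [Submodule.span_le, Set.singleton_subset_iff]
      exact hbI


lemma isUnit_iff_list {x : Eis} :
    IsUnit x ↔ x = 1 ∨ x = -1 ∨ x = ω ∨ x = -ω ∨ x = ⟨1,1⟩ ∨ x = ⟨-1,-1⟩ := by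
  constructor
  · intro h
    have h1 := isUnit_iff_nrm.mp h
    simp only [nrm] at h1
    have h4 : (2 * x.re - x.im) ^ 2 + 3 * x.im ^ 2 = 4 := by linear_combination 4 * h1
    have h5 : -1 ≤ x.im ∧ x.im ≤ 1 := by
      constructor <;> nlinarith [sq_nonneg (2 * x.re - x.im), sq_nonneg (x.im - 1), sq_nonneg (x.im + 1)]
    have hb : x.im = 0 ∨ x.im = 1 ∨ x.im = -1 := by omega
    rcases hb with hb | hb | hb
    · have : (x.re - 1) * (x.re + 1) = 0 := by linear_combination h1 + (x.re - x.im) * hb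
      rcases mul_eq_zero.mp this with h' | h'
      · left; ext <;> simp <;> omega
      · right; left; ext <;> simp <;> omega
    · have : x.re * (x.re - 1) = 0 := by linear_combination h1 + (x.re - x.im - 1) * hb
      rcases mul_eq_zero.mp this with h' | h'
      · right; right; left; ext <;> simp [ω] <;> omega
      · right; right; right; right; left; ext <;> simp <;> omega
    · have : x.re * (x.re + 1) = 0 := by linear_combination h1 + (x.re - x.im + 1) * hb
      rcases mul_eq_zero.mp this with h' | h'
      · right; right; right; left; ext <;> simp [ω] <;> omega
      · right; right; right; right; right; ext <;> simp <;> omega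
  · rintro (rfl | rfl | rfl | rfl | rfl | rfl) <;>
      rw [isUnit_iff_nrm] <;> decide

lemma isUnit_omega : IsUnit ω := isUnit_iff_list.mpr (by tauto)
lemma isUnit_nOmegaSq : IsUnit (⟨1,1⟩ : Eis) := isUnit_iff_list.mpr (by tauto)

lemma unit_cube {x : Eis} (h : IsUnit x) : x ^ 3 = 1 ∨ x ^ 3 = -1 := by
  rcases isUnit_iff_list.mp h with rfl | rfl | rfl | rfl | rfl | rfl <;> [left; right; left; right; right; left] <;> decide

lemma lam_dvd_iff {x : Eis} : lam ∣ x ↔ (3 : ℤ) ∣ x.re + x.im := by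
  constructor
  · rintro ⟨y, rfl⟩
    refine ⟨-y.im, by simp; ring⟩
  · rintro ⟨k, hk⟩
    refine ⟨⟨x.im - 2 * k, -k⟩, by ext <;> simp <;> omega⟩

lemma lam_dvd_int {n : ℤ} : lam ∣ (n : Eis) ↔ (3:ℤ) ∣ n := by
  rw [lam_dvd_iff]; simp

lemma nrm_lam : nrm lam = 3 := by decide

lemma irreducible_of_nrm_prime {x : Eis} (h : Prime (nrm x)) : Irreducible x := by
  constructor
  · intro hu
    rw [isUnit_iff_nrm.mp hu] at h
    exact h.not_unit isUnit_one
  · intro a b hab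
    have h2 : nrm a * nrm b = nrm x := by rw [hab, nrm_mul]
    rcases (h.irreducible.isUnit_or_isUnit h2.symm) with h' | h'
    · left
      rw [isUnit_iff_nrm]
      rcases Int.isUnit_iff.mp h' with h'' | h''
      · exact h''
      · have := nrm_nonneg a; omega
    · right
      rw [isUnit_iff_nrm]
      rcases Int.isUnit_iff.mp h' with h'' | h''
      · exact h''
      · have := nrm_nonneg b; omega

lemma prime_of_nrm_prime {x : Eis} (h : Prime (nrm x)) : Prime x :=
  (irreducible_iff_prime).mp (irreducible_of_nrm_prime h)

lemma three_eq : (3 : Eis) = lam ^ 2 * ⟨1, 1⟩ := by decide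

lemma lam_prime : Prime lam := prime_of_nrm_prime (by rw [nrm_lam]; exact Int.prime_three)

lemma lam_ne_zero : lam ≠ 0 := lam_prime.ne_zero

lemma assoc_lam4_nine : Associated (lam ^ 4) (9 : Eis) :=
  ⟨isUnit_omega.unit, by rw [IsUnit.unit_spec]; decide⟩

lemma assoc_lam2_three : Associated (lam ^ 2) (3 : Eis) :=
  ⟨isUnit_nOmegaSq.unit, by rw [IsUnit.unit_spec]; decide⟩

lemma nine_dvd_iff_lam4 {x : Eis} : (9 : Eis) ∣ x ↔ lam ^ 4 ∣ x :=
  (assoc_lam4_nine.dvd_iff_dvd_left).symm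

lemma three_dvd_iff_lam2 {x : Eis} : (3 : Eis) ∣ x ↔ lam ^ 2 ∣ x :=
  (assoc_lam2_three.dvd_iff_dvd_left).symm

lemma intCast_ofNat_eq (n : ℕ) [n.AtLeastTwo] : ((OfNat.ofNat n : ℤ) : Eis) = OfNat.ofNat n := by
  ext <;> simp

lemma three_dvd_int_iff {n : ℤ} : (3 : Eis) ∣ (n : Eis) ↔ (3:ℤ) ∣ n := by
  rw [show (3 : Eis) = ((3:ℤ) : Eis) from by ext <;> simp]
  rw [intCast_dvd_iff]
  simp

lemma nine_dvd_int_iff {n : ℤ} : (9 : Eis) ∣ (n : Eis) ↔ (9:ℤ) ∣ n := by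
  rw [show (9 : Eis) = ((9:ℤ) : Eis) from by ext <;> simp]
  rw [intCast_dvd_iff]
  simp

lemma lam3_dvd_int {n : ℤ} (h : lam ^ 3 ∣ (n : Eis)) : (9:ℤ) ∣ n := by
  have h2 : lam ^ 2 ∣ (n : Eis) := dvd_trans (pow_dvd_pow lam (by norm_num)) h
  have h3 : (3:ℤ) ∣ n := three_dvd_int_iff.mp (three_dvd_iff_lam2.mpr h2)
  obtain ⟨m, rfl⟩ := h3
  have h4 : ((3 * m : ℤ) : Eis) = lam ^ 2 * (⟨1,1⟩ * (m : Eis)) := by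
    push_cast
    rw [three_eq]; ring
  rw [h4] at h
  have h5 : lam ∣ ⟨1,1⟩ * (m : Eis) := by
    have hpow : lam ^ 3 = lam ^ 2 * lam := by ring
    rw [hpow] at h
    exact (mul_dvd_mul_iff_left (pow_ne_zero 2 lam_ne_zero)).mp h
  have h6 : lam ∣ (m : Eis) := by
    rcases lam_prime.dvd_mul.mp h5 with h' | h'
    · exact absurd (isUnit_of_dvd_unit h' isUnit_nOmegaSq) lam_prime.not_unit
    · exact h'
  have := lam_dvd_int.mp h6
  omega

lemma resid (x : Eis) : lam ∣ x ∨ lam ∣ x - 1 ∨ lam ∣ x + 1 := by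
  simp only [lam_dvd_iff, sub_re, sub_im, add_re, add_im, one_re, one_im]
  omega

lemma lam_dvd_cube_sub (τ : Eis) : lam ∣ τ ^ 3 - τ := by
  have heq : τ ^ 3 - τ = τ * (τ - 1) * (τ + 1) := by ring
  rw [heq]
  rcases resid τ with h | h | h
  · exact (h.mul_right _).mul_right _
  · exact (Dvd.dvd.mul_left h τ).mul_right _
  · exact Dvd.dvd.mul_left h _

lemma cube_cong {α : Eis} (h : ¬ lam ∣ α) : (9:Eis) ∣ α ^ 3 - 1 ∨ (9:Eis) ∣ α ^ 3 + 1 := by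
  have h3 := three_eq
  rcases resid α with h' | h' | h'
  · exact absurd h' h
  · left
    obtain ⟨τ, hτ⟩ := h'
    have hα : α = 1 + lam * τ := by linear_combination hτ
    rw [nine_dvd_iff_lam4]
    have key : α ^ 3 - 1 = lam ^ 3 * (⟨1,1⟩ * τ + τ ^ 3) + lam ^ 4 * (⟨1,1⟩ * τ ^ 2) := by
      rw [hα]
      linear_combination (lam * τ + lam ^ 2 * τ ^ 2) * h3
    rw [key]
    have h5 : lam ∣ ⟨1,1⟩ * τ + τ ^ 3 := by
      have : (⟨1,1⟩ : Eis) * τ + τ ^ 3 = (τ ^ 3 - τ) + (⟨2,1⟩ : Eis) * τ := by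
        have : (⟨1,1⟩ : Eis) + 1 = ⟨2,1⟩ := by decide
        linear_combination τ * this
      rw [this]
      refine dvd_add (lam_dvd_cube_sub τ) (Dvd.dvd.mul_right ?_ τ)
      rw [lam_dvd_iff]; decide
    obtain ⟨y, hy⟩ := h5
    rw [hy]
    exact dvd_add ⟨y, by ring⟩ ⟨⟨1,1⟩ * τ ^ 2, rfl⟩
  · right
    obtain ⟨τ, hτ⟩ := h'
    have hα : α = -1 + lam * τ := by linear_combination hτ
    rw [nine_dvd_iff_lam4]
    have key : α ^ 3 + 1 = lam ^ 3 * (⟨1,1⟩ * τ + τ ^ 3) - lam ^ 4 * (⟨1,1⟩ * τ ^ 2) := by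
      rw [hα]
      linear_combination (lam * τ - lam ^ 2 * τ ^ 2) * h3
    rw [key]
    have h5 : lam ∣ ⟨1,1⟩ * τ + τ ^ 3 := by
      have : (⟨1,1⟩ : Eis) * τ + τ ^ 3 = (τ ^ 3 - τ) + (⟨2,1⟩ : Eis) * τ := by
        have : (⟨1,1⟩ : Eis) + 1 = ⟨2,1⟩ := by decide
        linear_combination τ * this
      rw [this]
      refine dvd_add (lam_dvd_cube_sub τ) (Dvd.dvd.mul_right ?_ τ)
      rw [lam_dvd_iff]; decide
    obtain ⟨y, hy⟩ := h5
    rw [hy]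
    exact dvd_sub ⟨y, by ring⟩ ⟨⟨1,1⟩ * τ ^ 2, rfl⟩


lemma nrm_cast_ne_two_mod3 {x : Eis} {q : ℤ} (hq : q % 3 = 2) : nrm x ≠ q := by
  intro hn
  have key : ∀ u v : ZMod 3, u ^ 2 - u * v + v ^ 2 ≠ 2 := by decide
  have h1 : ((nrm x : ℤ) : ZMod 3) = (x.re : ZMod 3) ^ 2 - (x.re : ZMod 3) * (x.im : ZMod 3) + (x.im : ZMod 3) ^ 2 := by
    simp only [nrm]; push_cast; ring
  have h2 : ((q : ℤ) : ZMod 3) = ((2 : ℤ) : ZMod 3) := by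
    rw [ZMod.intCast_eq_intCast_iff]
    show q % 3 = 2 % 3
    omega
  rw [hn, h2] at h1
  exact key _ _ (by push_cast at h1; exact h1.symm)

lemma prime_nat_eis {p : ℕ} (hp : p.Prime) (h3 : p % 3 = 2) : Prime ((p : ℤ) : Eis) := by
  have hp2 : (2:ℕ) ≤ p := hp.two_le
  have h3' : (p : ℤ) % 3 = 2 := by omega
  rw [← irreducible_iff_prime]
  constructor
  · intro hu
    have h1 := isUnit_iff_nrm.mp hu
    rw [nrm_intCast] at h1
    nlinarith [sq_nonneg ((p:ℤ) - 1), sq_nonneg ((p:ℤ) + 1)]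
  · intro a b hab
    have h2 : nrm a * nrm b = (p:ℤ) ^ 2 := by rw [← nrm_intCast (p:ℤ), hab, nrm_mul]
    by_contra hcon
    push_neg at hcon
    obtain ⟨ha, hb⟩ := hcon
    rw [isUnit_iff_nrm] at ha hb
    have hna := nrm_nonneg a
    have hnb := nrm_nonneg b
    have hda : (nrm a).natAbs ∣ p ^ 2 := by
      have hdvd : nrm a ∣ (p:ℤ) ^ 2 := ⟨nrm b, h2.symm⟩
      have h4 := Int.natAbs_dvd_natAbs.mpr hdvd
      rwa [Int.natAbs_pow, Int.natAbs_natCast] at h4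
    obtain ⟨m, hm, hna'⟩ := (Nat.dvd_prime_pow hp).mp hda
    have h5 : nrm a = ((nrm a).natAbs : ℤ) := (Int.eq_natAbs_of_nonneg hna)
    have h6 : nrm a = ((p : ℤ)) ^ m := by rw [h5, hna']; push_cast; ring
    interval_cases m
    · rw [pow_zero] at h6
      exact ha h6
    · rw [pow_one] at h6
      exact nrm_cast_ne_two_mod3 h3' h6
    · rw [h6] at h2
      have hp0 : ((p:ℤ)) ^ 2 ≠ 0 := by positivity
      have : nrm b = 1 := mul_left_cancel₀ hp0 (h2.trans (mul_one _).symm)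
      exact hb this

lemma unit_eq_one_of_lam3 {v : Eis} (hv : IsUnit v) (h : lam ^ 3 ∣ v - 1) : v = 1 := by
  have h27 : nrm (lam ^ 3) = 27 := by decide
  rcases isUnit_iff_list.mp hv with rfl | rfl | rfl | rfl | rfl | rfl
  · rfl
  all_goals (exfalso; have h2 := nrm_dvd h; rw [h27] at h2; simp [nrm, ω] at h2 <;> omega)

lemma no_unit_p {pz : ℤ} (hp9 : pz % 9 = 2 ∨ pz % 9 = 5) {g : Eis} (hg : IsUnit g)
    (h : lam ^ 3 ∣ ((pz : Eis) * g + 1)) : False := by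
  have h32 : lam ^ 2 ∣ ((pz : Eis) * g + 1) := dvd_trans (pow_dvd_pow lam (by norm_num)) h
  have h33 : (3 : Eis) ∣ ((pz : Eis) * g + 1) := three_dvd_iff_lam2.mpr h32
  rw [show (3 : Eis) = ((3:ℤ) : Eis) from by ext <;> simp, intCast_dvd_iff] at h33
  rcases isUnit_iff_list.mp hg with rfl | rfl | rfl | rfl | rfl | rfl
  · have h4 : ((pz : Eis) * 1 + 1) = ((pz + 1 : ℤ) : Eis) := by push_cast; ring
    rw [h4] at h
    have := lam3_dvd_int h
    omega
  · have h4 : ((pz : Eis) * (-1) + 1) = ((-pz + 1 : ℤ) : Eis) := by push_cast; ring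
    rw [h4] at h
    have := lam3_dvd_int h
    omega
  · simp [ω] at h33 <;> omega
  · simp [ω] at h33 <;> omega
  · simp at h33; omega
  · simp at h33; omega

lemma mod9_units {pz : ℤ} (hp9 : pz % 9 = 2 ∨ pz % 9 = 5) {f₂ f₃ : Eis}
    (h2 : IsUnit f₂) (h3 : IsUnit f₃) (h : (9:Eis) ∣ ((pz : Eis) + f₂ + f₃)) :
    pz % 9 = 2 ∧ f₂ = -1 ∧ f₃ = -1 := by
  rw [show (9 : Eis) = ((9:ℤ) : Eis) from by ext <;> simp, intCast_dvd_iff] at h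
  rcases isUnit_iff_list.mp h2 with rfl | rfl | rfl | rfl | rfl | rfl <;>
    rcases isUnit_iff_list.mp h3 with rfl | rfl | rfl | rfl | rfl | rfl <;>
    simp [ω] at h <;>
    first
      | (refine ⟨?_, rfl, rfl⟩; omega)
      | (exfalso; omega)

lemma nrm_unit_sub {U V : Eis} (hU : IsUnit U) (hV : IsUnit V) :
    nrm (U - V) = 0 ∨ nrm (U - V) = 1 ∨ nrm (U - V) = 3 ∨ nrm (U - V) = 4 := by
  rcases isUnit_iff_list.mp hU with rfl | rfl | rfl | rfl | rfl | rfl <;>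
    rcases isUnit_iff_list.mp hV with rfl | rfl | rfl | rfl | rfl | rfl <;>
    decide


lemma nrm_eq_nn (x : Eis) : nrm x = (nn x : ℤ) := by
  have := nrm_nonneg x; simp only [nn]; omega

lemma nn_mul (x y : Eis) : nn (x * y) = nn x * nn y := by
  have h := nrm_mul x y
  rw [nrm_eq_nn x, nrm_eq_nn y, nrm_eq_nn (x*y)] at h
  exact_mod_cast h

lemma nrm_pow3 (x : Eis) : nrm (x ^ 3) = nrm x ^ 3 := by
  rw [show x ^ 3 = x * x * x from by ring, nrm_mul, nrm_mul]; ring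

lemma nn_pos {x : Eis} (h : x ≠ 0) : 0 < nn x := by
  have := nrm_pos h; simp only [nn]; omega

lemma nn_eq_zero {x : Eis} (h : x = 0) : nn x = 0 := by subst h; rfl

lemma nn_unit {x : Eis} (h : IsUnit x) : nn x = 1 := by
  have := isUnit_iff_nrm.mp h; simp only [nn]; omega

lemma nn_lam : nn lam = 3 := by rfl

lemma isCoprime_isUnit_right {x u : Eis} (hu : IsUnit u) : IsCoprime x u := by
  obtain ⟨v, hv⟩ := hu.exists_right_inv
  exact ⟨0, v, by rw [zero_mul, zero_add, mul_comm]; exact hv⟩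

lemma cube_extract {x y c u : Eis} (hu : IsUnit u) (hxy : IsCoprime x y)
    (h : x * y = u * c ^ 3) : ∃ d v : Eis, IsUnit v ∧ x = v * d ^ 3 := by
  obtain ⟨w, hw⟩ := hu.exists_right_inv
  have h2 : (w * x) * y = c ^ 3 := by
    have : u * ((w * x) * y) = u * c ^ 3 := by
      calc u * ((w * x) * y) = (u * w) * (x * y) := by ring
      _ = (u * w) * (u * c ^ 3) := by rw [h]
      _ = u * c ^ 3 := by rw [hw]; ring
    exact mul_left_cancel₀ hu.ne_zero this
  have hco : IsCoprime (w * x) y := by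
    obtain ⟨s, t, hst⟩ := hxy
    exact ⟨s * u, t, by linear_combination hst + (s * x) * hw⟩
  obtain ⟨d, hd⟩ := exists_associated_pow_of_mul_eq_pow' hco h2
  obtain ⟨V, hV⟩ := hd
  refine ⟨d, u * V, hu.mul V.isUnit, ?_⟩
  have : u * (w * x) = u * (V * d ^ 3) := by rw [← hV]; ring
  have h3 := mul_left_cancel₀ hu.ne_zero this
  calc x = (u * w) * x := by rw [hw]; ring
  _ = u * (w * x) := by ring
  _ = u * (V * d ^ 3) := by rw [this]
  _ = (u * V) * d ^ 3 := by ring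

lemma coprime_factors {a b f g w₁ w₂ s₁ t₁ s₂ t₂ : Eis} (hco : IsCoprime a b)
    (hnl : ¬ lam ∣ f) (hf0 : f ≠ 0) (hw₁ : IsUnit w₁) (hw₂ : IsUnit w₂)
    (hB : s₁ * f + t₁ * g = lam * (w₁ * b)) (hA : s₂ * f + t₂ * g = lam * (w₂ * a)) :
    IsCoprime f g := by
  refine isCoprime_of_prime_dvd (fun ⟨h, _⟩ => hf0 h) (fun z hz hzf hzg => ?_)
  have hzb : z ∣ lam * (w₁ * b) := hB ▸ dvd_add (hzf.mul_left s₁) (hzg.mul_left t₁)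
  have hza : z ∣ lam * (w₂ * a) := hA ▸ dvd_add (hzf.mul_left s₂) (hzg.mul_left t₂)
  rcases hz.dvd_mul.mp hzb with h | h
  · exact hnl (((hz.associated_of_dvd lam_prime h).symm.dvd).trans hzf)
  · have hzb' : z ∣ b := (hz.dvd_mul.mp h).resolve_left
      (fun h' => hz.not_unit (isUnit_of_dvd_unit h' hw₁))
    rcases hz.dvd_mul.mp hza with h2 | h2
    · exact hnl (((hz.associated_of_dvd lam_prime h2).symm.dvd).trans hzf)
    · have hza' : z ∣ a := (hz.dvd_mul.mp h2).resolve_left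
        (fun h' => hz.not_unit (isUnit_of_dvd_unit h' hw₂))
      exact hz.not_unit (hco.isUnit_of_dvd' hza' hzb')

lemma coprime_factors' {a b f g w₁ w₂ s₁ t₁ s₂ t₂ : Eis} (hco : IsCoprime a b)
    (hf0 : f ≠ 0) (hw₁ : IsUnit w₁) (hw₂ : IsUnit w₂)
    (hB : s₁ * f + t₁ * g = w₁ * b) (hA : s₂ * f + t₂ * g = w₂ * a) :
    IsCoprime f g := by
  refine isCoprime_of_prime_dvd (fun ⟨h, _⟩ => hf0 h) (fun z hz hzf hzg => ?_)
  have hzb : z ∣ w₁ * b := hB ▸ dvd_add (hzf.mul_left s₁) (hzg.mul_left t₁)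
  have hza : z ∣ w₂ * a := hA ▸ dvd_add (hzf.mul_left s₂) (hzg.mul_left t₂)
  have hzb' : z ∣ b := (hz.dvd_mul.mp hzb).resolve_left
    (fun h' => hz.not_unit (isUnit_of_dvd_unit h' hw₁))
  have hza' : z ∣ a := (hz.dvd_mul.mp hza).resolve_left
    (fun h' => hz.not_unit (isUnit_of_dvd_unit h' hw₂))
  exact hz.not_unit (hco.isUnit_of_dvd' hza' hzb')

lemma cube_resid {α : Eis} (h : ¬ lam ∣ α) :
    ∃ s : Eis, (s = 1 ∨ s = -1) ∧ (9:Eis) ∣ α ^ 3 - s := by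
  rcases cube_cong h with h' | h'
  · exact ⟨1, Or.inl rfl, h'⟩
  · exact ⟨-1, Or.inr rfl, by rwa [sub_neg_eq_add]⟩

lemma isUnit_omega_add_one : IsUnit (ω + 1) := by
  rw [show ω + 1 = (⟨1,1⟩ : Eis) from by decide]
  exact isUnit_nOmegaSq

lemma sign_unit {s : Eis} (hs : s = 1 ∨ s = -1) : IsUnit s := by
  rcases hs with rfl | rfl
  exacts [isUnit_one, isUnit_one.neg]

lemma sign_sq {s : Eis} (hs : s = 1 ∨ s = -1) : s * s = 1 := by
  rcases hs with rfl | rfl <;> norm_num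


lemma caseI {pz : ℤ} (hp9 : pz % 9 = 2 ∨ pz % 9 = 5) (hp5 : 5 ≤ pz)
    (hP : Prime ((pz : ℤ) : Eis)) {a b c u : Eis} (hu : IsUnit u)
    (hco : IsCoprime a b) (hc0 : c ≠ 0) (hlc : ¬ lam ∣ c)
    (heq : a ^ 3 + b ^ 3 = u * ((pz : ℤ) : Eis) * c ^ 3) (hpd : ((pz : ℤ) : Eis) ∣ a + b) :
    ∃ A B C w : Eis, IsUnit w ∧ A ≠ 0 ∧ nn A < nn c ∧
      B ^ 3 + C ^ 3 = w * ((pz : ℤ) : Eis) * A ^ 3 := by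
  set P : Eis := ((pz : ℤ) : Eis) with hPdef
  have hlamP : ¬ lam ∣ P := by rw [hPdef, lam_dvd_int]; omega
  have hP0 : P ≠ 0 := hP.ne_zero
  have hid : ω ^ 2 + ω + 1 = 0 := by decide
  have hlam : lam = ω - 1 := by decide
  have hfactor : (a + b) * (a + ω * b) * (a + ω ^ 2 * b) = u * P * c ^ 3 := by
    linear_combination heq + (a ^ 2 * b + a * b ^ 2 * ω + b ^ 3 * (ω - 1)) * hid
  have hprod0 : (a + b) * (a + ω * b) * (a + ω ^ 2 * b) ≠ 0 := by
    rw [hfactor]; exact mul_ne_zero (mul_ne_zero hu.ne_zero hP0) (pow_ne_zero 3 hc0)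
  have hf₀0 : a + b ≠ 0 := fun h => hprod0 (by rw [h, zero_mul, zero_mul])
  have hf₁0 : a + ω * b ≠ 0 := fun h => hprod0 (by rw [h, mul_zero, zero_mul])
  have hf₂0 : a + ω ^ 2 * b ≠ 0 := fun h => hprod0 (by rw [h, mul_zero])
  have hl0 : ¬ lam ∣ a + b := by
    intro h
    have h2 : lam ∣ u * P * c ^ 3 := by
      rw [← hfactor]; exact (h.mul_right _).mul_right _
    rcases lam_prime.dvd_mul.mp h2 with h3 | h3
    · rcases lam_prime.dvd_mul.mp h3 with h4 | h4
      · exact lam_prime.not_unit (isUnit_of_dvd_unit h4 hu)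
      · exact hlamP h4
    · exact hlc (lam_prime.dvd_of_dvd_pow h3)
  have hl1 : ¬ lam ∣ a + ω * b := by
    intro h
    apply hl0
    have hrw : a + b = (a + ω * b) - lam * b := by linear_combination b * hlam
    rw [hrw]; exact dvd_sub h (dvd_mul_right lam b)
  have hl2 : ¬ lam ∣ a + ω ^ 2 * b := by
    intro h
    apply hl0
    have hrw : a + b = (a + ω ^ 2 * b) - lam * ((ω + 1) * b) := by
      linear_combination ((ω + 1) * b) * hlam
    rw [hrw]; exact dvd_sub h (dvd_mul_right lam _)
  have hc01 : IsCoprime (a + b) (a + ω * b) :=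
    coprime_factors hco hl0 hf₀0 isUnit_one isUnit_one
      (show (-1) * (a + b) + 1 * (a + ω * b) = lam * (1 * b) from by linear_combination (-b) * hlam)
      (show ω * (a + b) + (-1) * (a + ω * b) = lam * (1 * a) from by linear_combination (-a) * hlam)
  have hc02 : IsCoprime (a + b) (a + ω ^ 2 * b) :=
    coprime_factors hco hl0 hf₀0 isUnit_omega_add_one isUnit_omega_add_one
      (show (-1) * (a + b) + 1 * (a + ω ^ 2 * b) = lam * ((ω + 1) * b) from by
        linear_combination (-(ω + 1) * b) * hlam)
      (show (ω ^ 2) * (a + b) + (-1) * (a + ω ^ 2 * b) = lam * ((ω + 1) * a) from by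
        linear_combination (-(ω + 1) * a) * hlam)
  have hc12 : IsCoprime (a + ω * b) (a + ω ^ 2 * b) :=
    coprime_factors hco hl1 hf₁0 isUnit_omega isUnit_one
      (show (-1) * (a + ω * b) + 1 * (a + ω ^ 2 * b) = lam * (ω * b) from by
        linear_combination (-(ω * b)) * hlam)
      (show ω * (a + ω * b) + (-1) * (a + ω ^ 2 * b) = lam * (1 * a) from by
        linear_combination (-a) * hlam)
  obtain ⟨e, he⟩ := hpd
  have hedvd : e ∣ a + b := ⟨P, by rw [he]; ring⟩
  have hce1 : IsCoprime e (a + ω * b) := hc01.of_isCoprime_of_dvd_left hedvd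
  have hce2 : IsCoprime e (a + ω ^ 2 * b) := hc02.of_isCoprime_of_dvd_left hedvd
  have hprod : e * ((a + ω * b) * (a + ω ^ 2 * b)) = u * c ^ 3 := by
    apply mul_left_cancel₀ hP0
    calc P * (e * ((a + ω * b) * (a + ω ^ 2 * b)))
        = (a + b) * (a + ω * b) * (a + ω ^ 2 * b) := by rw [he]; ring
    _ = u * P * c ^ 3 := hfactor
    _ = P * (u * c ^ 3) := by ring
  obtain ⟨α, u₀, hu₀, hα⟩ := cube_extract hu (hce1.mul_right hce2) hprod
  obtain ⟨β, u₁, hu₁, hβ⟩ := cube_extract hu (hce1.symm.mul_right hc12)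
    (show (a + ω * b) * (e * (a + ω ^ 2 * b)) = u * c ^ 3 from by linear_combination hprod)
  obtain ⟨γ, u₂, hu₂, hγ⟩ := cube_extract hu (hce2.symm.mul_right hc12.symm)
    (show (a + ω ^ 2 * b) * (e * (a + ω * b)) = u * c ^ 3 from by linear_combination hprod)
  have he0 : e ≠ 0 := fun h => hf₀0 (by rw [he, h, mul_zero])
  have hα0 : α ≠ 0 := fun h => he0 (by rw [hα, h]; ring)
  have hβ0 : β ≠ 0 := fun h => hf₁0 (by rw [hβ, h]; ring)
  have hγ0 : γ ≠ 0 := fun h => hf₂0 (by rw [hγ, h]; ring)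
  have hαl : ¬ lam ∣ α := fun h => hl0 (by
    rw [he, hα]
    exact ((h.trans (dvd_pow_self α (by norm_num))).mul_left u₀).mul_left P)
  have hβl : ¬ lam ∣ β := fun h => hl1 (by
    rw [hβ]; exact (h.trans (dvd_pow_self β (by norm_num))).mul_left u₁)
  have hγl : ¬ lam ∣ γ := fun h => hl2 (by
    rw [hγ]; exact (h.trans (dvd_pow_self γ (by norm_num))).mul_left u₂)
  have hzero : P * (u₀ * α ^ 3) + ω * (u₁ * β ^ 3) + ω ^ 2 * (u₂ * γ ^ 3) = 0 := by
    rw [← hα, ← hβ, ← hγ, ← he]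
    linear_combination (a + b * (ω ^ 2 - ω + 1)) * hid
  obtain ⟨s₀, hs₀, h9α⟩ := cube_resid hαl
  obtain ⟨s₁, hs₁, h9β⟩ := cube_resid hβl
  obtain ⟨s₂, hs₂, h9γ⟩ := cube_resid hγl
  have h9sum : (9 : Eis) ∣ (P * (u₀ * s₀) + ω * (u₁ * s₁) + ω ^ 2 * (u₂ * s₂)) := by
    have key : P * (u₀ * s₀) + ω * (u₁ * s₁) + ω ^ 2 * (u₂ * s₂) =
        -(P * u₀ * (α ^ 3 - s₀) + ω * u₁ * (β ^ 3 - s₁) + ω ^ 2 * u₂ * (γ ^ 3 - s₂)) := by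
      linear_combination hzero
    rw [key]
    exact dvd_neg.mpr (dvd_add (dvd_add (h9α.mul_left _) (h9β.mul_left _)) (h9γ.mul_left _))
  have hE : IsUnit (u₀ * s₀) := hu₀.mul (sign_unit hs₀)
  obtain ⟨Einv, hEinv⟩ := hE.exists_right_inv
  have hEinvu : IsUnit Einv := IsUnit.of_mul_eq_one (u₀ * s₀) (by rw [mul_comm]; exact hEinv)
  have h9' : (9 : Eis) ∣ (P + ω * (u₁ * s₁) * Einv + ω ^ 2 * (u₂ * s₂) * Einv) := by
    have h1 : P + ω * (u₁ * s₁) * Einv + ω ^ 2 * (u₂ * s₂) * Einv =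
        (P * (u₀ * s₀) + ω * (u₁ * s₁) + ω ^ 2 * (u₂ * s₂)) * Einv := by
      linear_combination (-P) * hEinv
    rw [h1]
    exact h9sum.mul_right Einv
  obtain ⟨hpz2, hg₂e, hg₃e⟩ := mod9_units hp9
    ((isUnit_omega.mul (hu₁.mul (sign_unit hs₁))).mul hEinvu)
    (((isUnit_omega.pow 2).mul (hu₂.mul (sign_unit hs₂))).mul hEinvu) h9'
  have r₁ : ω * (u₁ * s₁) = -(u₀ * s₀) := by
    linear_combination (u₀ * s₀) * hg₂e - (ω * (u₁ * s₁)) * hEinv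
  have r₂ : ω ^ 2 * (u₂ * s₂) = -(u₀ * s₀) := by
    linear_combination (u₀ * s₀) * hg₃e - (ω ^ 2 * (u₂ * s₂)) * hEinv
  obtain ⟨y, hy⟩ := hu₀.exists_right_inv
  have hs₀2 := sign_sq hs₀
  have hs₁2 := sign_sq hs₁
  have hs₂2 := sign_sq hs₂
  have e1 : ω * u₁ = -(u₀ * (s₀ * s₁)) := by
    linear_combination s₁ * r₁ - (ω * u₁) * hs₁2
  have e2 : ω ^ 2 * u₂ = -(u₀ * (s₀ * s₂)) := by
    linear_combination s₂ * r₂ - (ω ^ 2 * u₂) * hs₂2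
  have e3 : P * (u₀ * α ^ 3) = u₀ * (s₀ * s₁) * β ^ 3 + u₀ * (s₀ * s₂) * γ ^ 3 := by
    linear_combination hzero - β ^ 3 * e1 - γ ^ 3 * e2
  -- norm bookkeeping
  have hccube : (u₀ * u₁ * u₂) * (α * β * γ) ^ 3 = u * c ^ 3 := by
    rw [← hprod, hα, hβ, hγ]; ring
  have hnnc : nn c = nn α * nn β * nn γ := by
    have h1 := congrArg nn hccube
    rw [nn_mul, nn_mul, nn_mul, nn_mul, nn_unit hu₀, nn_unit hu₁, nn_unit hu₂,
      nn_unit hu] at h1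
    have h2 : nn ((α * β * γ) ^ 3) = (nn α * nn β * nn γ) ^ 3 := by
      rw [show (α * β * γ) ^ 3 = (α*β*γ)*(α*β*γ)*(α*β*γ) from by ring, nn_mul, nn_mul,
        nn_mul, nn_mul]
      ring
    have h3 : nn (c ^ 3) = nn c ^ 3 := by
      rw [show c ^ 3 = c*c*c from by ring, nn_mul, nn_mul]; ring
    rw [h2, h3] at h1
    have := Nat.pow_left_injective (by norm_num : 3 ≠ 0) (by omega : (nn α * nn β * nn γ) ^ 3 = nn c ^ 3)
    omega
  by_cases hdeg : nn β * nn γ = 1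
  · exfalso
    have hnb1 : nn β = 1 := Nat.dvd_one.mp ⟨nn γ, hdeg.symm⟩
    have hnc1 : nn γ = 1 := Nat.dvd_one.mp ⟨nn β, by rw [mul_comm]; exact hdeg.symm⟩
    have hf₁u : IsUnit (a + ω * b) := by
      rw [isUnit_iff_nrm, hβ, nrm_mul, nrm_pow3, isUnit_iff_nrm.mp hu₁,
        show nrm β = 1 from by rw [nrm_eq_nn, hnb1]; rfl]
      ring
    have hf₂u : IsUnit (a + ω ^ 2 * b) := by
      rw [isUnit_iff_nrm, hγ, nrm_mul, nrm_pow3, isUnit_iff_nrm.mp hu₂,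
        show nrm γ = 1 from by rw [nrm_eq_nn, hnc1]; rfl]
      ring
    have hsubb : (a + ω * b) - (a + ω ^ 2 * b) = (ω - ω ^ 2) * b := by ring
    have hnb : nrm ((a + ω * b) - (a + ω ^ 2 * b)) = 3 * nrm b := by
      rw [hsubb, nrm_mul, show nrm (ω - ω ^ 2) = 3 from by decide]
    have hsuba : ω * (a + ω * b) - (a + ω ^ 2 * b) = (ω - 1) * a := by ring
    have hna : nrm (ω * (a + ω * b) - (a + ω ^ 2 * b)) = 3 * nrm a := by
      rw [hsuba, nrm_mul, show nrm (ω - 1) = 3 from by decide]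
    have hbb := nrm_unit_sub hf₁u hf₂u
    have haa := nrm_unit_sub (isUnit_omega.mul hf₁u) hf₂u
    rw [hnb] at hbb
    rw [hna] at haa
    have hnb1' : nrm b ≤ 1 := by omega
    have hna1' : nrm a ≤ 1 := by omega
    have hav : a = 0 ∨ a ^ 3 = 1 ∨ a ^ 3 = -1 := by
      have h0 := nrm_nonneg a
      rcases (by omega : nrm a = 0 ∨ nrm a = 1) with h' | h'
      · exact Or.inl (nrm_eq_zero_iff.mp h')
      · exact Or.inr (unit_cube (isUnit_iff_nrm.mpr h'))
    have hbv : b = 0 ∨ b ^ 3 = 1 ∨ b ^ 3 = -1 := by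
      have h0 := nrm_nonneg b
      rcases (by omega : nrm b = 0 ∨ nrm b = 1) with h' | h'
      · exact Or.inl (nrm_eq_zero_iff.mp h')
      · exact Or.inr (unit_cube (isUnit_iff_nrm.mpr h'))
    have h44 : nrm (a ^ 3 + b ^ 3) ≤ 4 := by
      rcases hav with rfl | h | h <;> rcases hbv with rfl | h' | h' <;>
        first
          | decide
          | (rw [h']; decide)
          | (rw [h]; decide)
          | (rw [h, h']; decide)
    have hrhs : nrm (a ^ 3 + b ^ 3) = pz ^ 2 * nrm c ^ 3 := by
      rw [heq, nrm_mul, nrm_mul, nrm_pow3, isUnit_iff_nrm.mp hu, hPdef, nrm_intCast]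
      ring
    have hc1 : 1 ≤ nrm c := nrm_pos hc0
    nlinarith [pow_le_pow_left₀ (by norm_num : (0:ℤ) ≤ 1) hc1 3]
  · refine ⟨α, s₀ * s₁ * β, s₀ * s₂ * γ, 1, isUnit_one, hα0, ?_, ?_⟩
    · have h1 : 0 < nn α := nn_pos hα0
      have h2 : 0 < nn β := nn_pos hβ0
      have h3 : 0 < nn γ := nn_pos hγ0
      have h4 : 2 ≤ nn β * nn γ := by
        have h5 : 0 < nn β * nn γ := Nat.mul_pos h2 h3
        omega
      calc nn α < nn α * (nn β * nn γ) := by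
            exact lt_mul_of_one_lt_right h1 (by omega)
      _ = nn c := by rw [hnnc]; ring
    · linear_combination (-y) * e3 - ((s₀ * s₁) * β ^ 3 + (s₀ * s₂) * γ ^ 3 - P * α ^ 3) * hy +
        (s₀ ^ 3 * s₁ * β ^ 3) * hs₁2 + (s₀ * s₁ * β ^ 3) * hs₀2 +
        (s₀ ^ 3 * s₂ * γ ^ 3) * hs₂2 + (s₀ * s₂ * γ ^ 3) * hs₀2


lemma caseII {pz : ℤ} (hp9 : pz % 9 = 2 ∨ pz % 9 = 5)
    (hP : Prime ((pz : ℤ) : Eis)) {a b c u : Eis} (hu : IsUnit u)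
    (hco : IsCoprime a b) (hc0 : c ≠ 0) (hlc : lam ∣ c)
    (heq : a ^ 3 + b ^ 3 = u * ((pz : ℤ) : Eis) * c ^ 3) (hheavy : lam ^ 2 ∣ a + b) :
    ∃ A B C w : Eis, IsUnit w ∧ A ≠ 0 ∧ nn A < nn c ∧
      B ^ 3 + C ^ 3 = w * ((pz : ℤ) : Eis) * A ^ 3 := by
  set P : Eis := ((pz : ℤ) : Eis) with hPdef
  have hlamP : ¬ lam ∣ P := by rw [hPdef, lam_dvd_int]; omega
  have hP0 : P ≠ 0 := hP.ne_zero
  have hid : ω ^ 2 + ω + 1 = 0 := by decide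
  have hlam : lam = ω - 1 := by decide
  have hfactor : (a + b) * (a + ω * b) * (a + ω ^ 2 * b) = u * P * c ^ 3 := by
    linear_combination heq + (a ^ 2 * b + a * b ^ 2 * ω + b ^ 3 * (ω - 1)) * hid
  have hprod0 : (a + b) * (a + ω * b) * (a + ω ^ 2 * b) ≠ 0 := by
    rw [hfactor]; exact mul_ne_zero (mul_ne_zero hu.ne_zero hP0) (pow_ne_zero 3 hc0)
  have hf₀0 : a + b ≠ 0 := fun h => hprod0 (by rw [h, zero_mul, zero_mul])
  have hf₁0 : a + ω * b ≠ 0 := fun h => hprod0 (by rw [h, mul_zero, zero_mul])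
  have hf₂0 : a + ω ^ 2 * b ≠ 0 := fun h => hprod0 (by rw [h, mul_zero])
  have hl₀f : lam ∣ a + b := dvd_trans (dvd_pow_self lam (by norm_num)) hheavy
  have hla : ¬ lam ∣ a := by
    intro h
    have hb : lam ∣ b := (dvd_add_right h).mp hl₀f
    exact lam_prime.not_unit (hco.isUnit_of_dvd' h hb)
  have hlb : ¬ lam ∣ b := by
    intro h
    have ha : lam ∣ a := by
      have : a = (a + b) - b := by ring
      rw [this]; exact dvd_sub hl₀f h
    exact lam_prime.not_unit (hco.isUnit_of_dvd' ha h)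
  obtain ⟨c₁, hc₁⟩ := hlc
  -- lam^4 divides c^3, so lam divides c₁
  obtain ⟨sa, hsa, h9a⟩ := cube_resid hla
  obtain ⟨sb, hsb, h9b⟩ := cube_resid hlb
  have h4c : lam ^ 4 ∣ u * P * c ^ 3 := by
    rw [← heq]
    have hkey : a ^ 3 + b ^ 3 = (a ^ 3 - sa) + (b ^ 3 - sb) + (sa + sb) := by ring
    have h3c3 : lam ^ 3 ∣ c ^ 3 := by
      rw [hc₁, mul_pow]
      exact (pow_dvd_pow lam (by norm_num)).mul_right _
    have h2 : lam ^ 3 ∣ sa + sb := by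
      have : sa + sb = (a ^ 3 + b ^ 3) - (a ^ 3 - sa) - (b ^ 3 - sb) := by ring
      rw [this, heq]
      refine dvd_sub (dvd_sub ?_ ?_) ?_
      · exact h3c3.mul_left (u * P)
      · exact dvd_trans (pow_dvd_pow lam (by norm_num)) (nine_dvd_iff_lam4.mp h9a)
      · exact dvd_trans (pow_dvd_pow lam (by norm_num)) (nine_dvd_iff_lam4.mp h9b)
    have hsum0 : sa + sb = 0 := by
      rcases hsa with rfl | rfl <;> rcases hsb with rfl | rfl
      · exfalso
        have h3 := nrm_dvd h2
        rw [show nrm (lam ^ 3) = 27 from by decide,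
          show nrm ((1 : Eis) + 1) = 4 from by decide] at h3
        omega
      · ring
      · ring
      · exfalso
        have h3 := nrm_dvd h2
        rw [show nrm (lam ^ 3) = 27 from by decide,
          show nrm ((-1 : Eis) + -1) = 4 from by decide] at h3
        omega
    rw [hkey, hsum0, add_zero]
    exact dvd_add (nine_dvd_iff_lam4.mp h9a) (nine_dvd_iff_lam4.mp h9b)
  have h4c' : lam ^ 4 ∣ c ^ 3 := by
    have hnl : ¬ lam ∣ u * P := by
      intro h
      rcases lam_prime.dvd_mul.mp h with h' | h'
      · exact lam_prime.not_unit (isUnit_of_dvd_unit h' hu)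
      · exact hlamP h'
    exact lam_prime.pow_dvd_of_dvd_mul_left 4 hnl h4c
  have hlc₁ : lam ∣ c₁ := by
    rw [hc₁, mul_pow] at h4c'
    obtain ⟨t, ht⟩ := h4c'
    have h1 : lam ^ 3 * c₁ ^ 3 = lam ^ 3 * (lam * t) := by rw [ht]; ring
    have h2 := mul_left_cancel₀ (pow_ne_zero 3 lam_ne_zero) h1
    exact lam_prime.dvd_of_dvd_pow (h2 ▸ dvd_mul_right lam t : lam ∣ c₁ ^ 3)
  obtain ⟨g₀, hg₀⟩ := hl₀f
  have hl₁f : lam ∣ a + ω * b := by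
    have hrw : a + ω * b = (a + b) + lam * b := by linear_combination (-b) * hlam
    rw [hrw]; exact dvd_add ⟨g₀, hg₀.symm ▸ rfl⟩ (dvd_mul_right _ _)
  obtain ⟨g₁, hg₁⟩ := hl₁f
  have hl₂f : lam ∣ a + ω ^ 2 * b := by
    have hrw : a + ω ^ 2 * b = (a + b) + lam * ((ω + 1) * b) := by
      linear_combination (-(ω + 1) * b) * hlam
    rw [hrw]; exact dvd_add ⟨g₀, hg₀.symm ▸ rfl⟩ (dvd_mul_right _ _)
  obtain ⟨g₂, hg₂⟩ := hl₂f
  have hg₀l : lam ∣ g₀ := by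
    obtain ⟨t, ht⟩ := hheavy
    have h1 : lam * g₀ = lam * (lam * t) := by rw [← hg₀, ht]; ring
    exact ⟨t, mul_left_cancel₀ lam_ne_zero h1⟩
  have hprodg : g₀ * g₁ * g₂ = u * P * c₁ ^ 3 := by
    apply mul_left_cancel₀ (pow_ne_zero 3 lam_ne_zero)
    calc lam ^ 3 * (g₀ * g₁ * g₂) = (lam * g₀) * (lam * g₁) * (lam * g₂) := by ring
    _ = (a + b) * (a + ω * b) * (a + ω ^ 2 * b) := by rw [← hg₀, ← hg₁, ← hg₂]
    _ = u * P * c ^ 3 := hfactor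
    _ = lam ^ 3 * (u * P * c₁ ^ 3) := by rw [hc₁]; ring
  have hg₀0 : g₀ ≠ 0 := fun h => hf₀0 (by rw [hg₀, h, mul_zero])
  have hg₁0 : g₁ ≠ 0 := fun h => hf₁0 (by rw [hg₁, h, mul_zero])
  have hg₂0 : g₂ ≠ 0 := fun h => hf₂0 (by rw [hg₂, h, mul_zero])
  have q01b : (-1) * g₀ + 1 * g₁ = 1 * b :=
    mul_left_cancel₀ lam_ne_zero (by linear_combination hg₀ - hg₁ - b * hlam)
  have q01a : ω * g₀ + (-1) * g₁ = 1 * a :=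
    mul_left_cancel₀ lam_ne_zero (by linear_combination (-ω) * hg₀ + hg₁ - a * hlam)
  have q02b : (-1) * g₀ + 1 * g₂ = (ω + 1) * b :=
    mul_left_cancel₀ lam_ne_zero (by linear_combination hg₀ - hg₂ - ((ω + 1) * b) * hlam)
  have q02a : ω ^ 2 * g₀ + (-1) * g₂ = (ω + 1) * a :=
    mul_left_cancel₀ lam_ne_zero (by linear_combination (-ω ^ 2) * hg₀ + hg₂ - ((ω + 1) * a) * hlam)
  have q12b : (-1) * g₁ + 1 * g₂ = ω * b :=
    mul_left_cancel₀ lam_ne_zero (by linear_combination hg₁ - hg₂ - (ω * b) * hlam)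
  have q12a : ω * g₁ + (-1) * g₂ = 1 * a :=
    mul_left_cancel₀ lam_ne_zero (by linear_combination (-ω) * hg₁ + hg₂ - a * hlam)
  have hg₁l : ¬ lam ∣ g₁ := by
    intro h
    have hd : lam ∣ b := by
      have : b = (-1) * g₀ + 1 * g₁ := by rw [q01b]; ring
      rw [this]
      exact dvd_add (hg₀l.mul_left _) (h.mul_left _)
    exact hlb hd
  have hg₂l : ¬ lam ∣ g₂ := by
    intro h
    have hd : lam ∣ (ω + 1) * b := by
      rw [← q02b]
      exact dvd_add (hg₀l.mul_left _) (h.mul_left _)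
    rcases lam_prime.dvd_mul.mp hd with h' | h'
    · exact lam_prime.not_unit (isUnit_of_dvd_unit h' isUnit_omega_add_one)
    · exact hlb h'
  have hcg01 : IsCoprime g₀ g₁ := coprime_factors' hco hg₀0 isUnit_one isUnit_one q01b q01a
  have hcg02 : IsCoprime g₀ g₂ :=
    coprime_factors' hco hg₀0 isUnit_omega_add_one isUnit_omega_add_one q02b q02a
  have hcg12 : IsCoprime g₁ g₂ := coprime_factors' hco hg₁0 isUnit_omega isUnit_one q12b q12a
  have hgsum : g₀ + ω * g₁ + ω ^ 2 * g₂ = 0 := by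
    apply mul_left_cancel₀ lam_ne_zero
    rw [mul_zero]
    linear_combination (-1) * hg₀ - ω * hg₁ - ω ^ 2 * hg₂ + (a + b * (ω ^ 2 - ω + 1)) * hid
  have hPdvd : P ∣ g₀ * g₁ * g₂ := by rw [hprodg]; exact ⟨u * c₁ ^ 3, by ring⟩
  have hc₁0 : c₁ ≠ 0 := by
    intro h; exact hc0 (by rw [hc₁, h, mul_zero])
  rcases hP.dvd_mul.mp hPdvd with h01 | hPg₂
  · rcases hP.dvd_mul.mp h01 with hPg₀ | hPg₁
    · -- P ∣ g₀ : the descent case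
      obtain ⟨e, he⟩ := hPg₀
      have hedvd : e ∣ g₀ := ⟨P, by rw [he]; ring⟩
      have hce1 : IsCoprime e g₁ := hcg01.of_isCoprime_of_dvd_left hedvd
      have hce2 : IsCoprime e g₂ := hcg02.of_isCoprime_of_dvd_left hedvd
      have hprod : e * (g₁ * g₂) = u * c₁ ^ 3 := by
        apply mul_left_cancel₀ hP0
        calc P * (e * (g₁ * g₂)) = g₀ * g₁ * g₂ := by rw [he]; ring
        _ = u * P * c₁ ^ 3 := hprodg
        _ = P * (u * c₁ ^ 3) := by ring
      obtain ⟨δ₀, u₀, hu₀, hδ₀⟩ := cube_extract hu (hce1.mul_right hce2) hprod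
      obtain ⟨δ₁, u₁, hu₁, hδ₁⟩ := cube_extract hu (hce1.symm.mul_right hcg12)
        (show g₁ * (e * g₂) = u * c₁ ^ 3 from by linear_combination hprod)
      obtain ⟨δ₂, u₂, hu₂, hδ₂⟩ := cube_extract hu (hce2.symm.mul_right hcg12.symm)
        (show g₂ * (e * g₁) = u * c₁ ^ 3 from by linear_combination hprod)
      have he0 : e ≠ 0 := fun h => hg₀0 (by rw [he, h, mul_zero])
      have hδ₀0 : δ₀ ≠ 0 := fun h => he0 (by rw [hδ₀, h]; ring)
      have hδ₁0 : δ₁ ≠ 0 := fun h => hg₁0 (by rw [hδ₁, h]; ring)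
      have hδ₂0 : δ₂ ≠ 0 := fun h => hg₂0 (by rw [hδ₂, h]; ring)
      have hδ₁l : ¬ lam ∣ δ₁ := fun h => hg₁l (by
        rw [hδ₁]; exact (h.trans (dvd_pow_self δ₁ (by norm_num))).mul_left u₁)
      have hδ₂l : ¬ lam ∣ δ₂ := fun h => hg₂l (by
        rw [hδ₂]; exact (h.trans (dvd_pow_self δ₂ (by norm_num))).mul_left u₂)
      have hδ₀l : lam ∣ δ₀ := by
        have h1 : lam ∣ e := by
          rcases lam_prime.dvd_mul.mp (he ▸ hg₀l) with h' | h'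
          · exact absurd h' hlamP
          · exact h'
        rw [hδ₀] at h1
        rcases lam_prime.dvd_mul.mp h1 with h' | h'
        · exact absurd (isUnit_of_dvd_unit h' hu₀) lam_prime.not_unit
        · exact lam_prime.dvd_of_dvd_pow h'
      have hzero : P * (u₀ * δ₀ ^ 3) + ω * (u₁ * δ₁ ^ 3) + ω ^ 2 * (u₂ * δ₂ ^ 3) = 0 := by
        rw [← hδ₀, ← hδ₁, ← hδ₂, ← he]
        exact hgsum
      obtain ⟨s₁, hs₁, h9δ₁⟩ := cube_resid hδ₁l
      obtain ⟨s₂, hs₂, h9δ₂⟩ := cube_resid hδ₂l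
      have h3sum : lam ^ 3 ∣ ω * (u₁ * s₁) + ω ^ 2 * (u₂ * s₂) := by
        have key : ω * (u₁ * s₁) + ω ^ 2 * (u₂ * s₂) =
            -(P * (u₀ * δ₀ ^ 3)) - ω * u₁ * (δ₁ ^ 3 - s₁) - ω ^ 2 * u₂ * (δ₂ ^ 3 - s₂) := by
          linear_combination hzero
        rw [key]
        refine dvd_sub (dvd_sub ?_ ?_) ?_
        · exact dvd_neg.mpr (((pow_dvd_pow_of_dvd hδ₀l 3).mul_left u₀).mul_left P)
        · exact (dvd_trans (pow_dvd_pow lam (by norm_num)) (nine_dvd_iff_lam4.mp h9δ₁)).mul_left _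
        · exact (dvd_trans (pow_dvd_pow lam (by norm_num)) (nine_dvd_iff_lam4.mp h9δ₂)).mul_left _
      have hωu₁s₁ : IsUnit (ω * (u₁ * s₁)) := isUnit_omega.mul (hu₁.mul (sign_unit hs₁))
      obtain ⟨w, hw⟩ := hωu₁s₁.exists_right_inv
      have hwu : IsUnit w := IsUnit.of_mul_eq_one _ (by rw [mul_comm]; exact hw)
      have hX : lam ^ 3 ∣ (-(ω ^ 2 * (u₂ * s₂) * w)) - 1 := by
        have key : (-(ω ^ 2 * (u₂ * s₂) * w)) - 1 =
            -((ω * (u₁ * s₁) + ω ^ 2 * (u₂ * s₂)) * w) + (ω * (u₁ * s₁) * w - 1) := by ring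
        rw [key, hw, sub_self, add_zero]
        exact dvd_neg.mpr (h3sum.mul_right w)
      have hv1 := unit_eq_one_of_lam3
        ((((isUnit_omega.pow 2).mul (hu₂.mul (sign_unit hs₂))).mul hwu).neg) hX
      have r2 : ω ^ 2 * (u₂ * s₂) = -(ω * (u₁ * s₁)) := by
        linear_combination (-(ω * (u₁ * s₁))) * hv1 - (ω ^ 2 * (u₂ * s₂)) * hw
      have hs₂2 := sign_sq hs₂
      have t1 : ω ^ 2 * u₂ = -(ω * u₁ * (s₁ * s₂)) := by
        linear_combination s₂ * r2 - (ω ^ 2 * u₂) * hs₂2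
      have t2 : P * (u₀ * δ₀ ^ 3) + ω * u₁ * δ₁ ^ 3 - ω * u₁ * (s₁ * s₂) * δ₂ ^ 3 = 0 := by
        linear_combination hzero - δ₂ ^ 3 * t1
      -- norms
      have hcc : (u₀ * u₁ * u₂) * (δ₀ * δ₁ * δ₂) ^ 3 = u * c₁ ^ 3 := by
        rw [← hprod, hδ₀, hδ₁, hδ₂]; ring
      have hnnc₁ : nn c₁ = nn δ₀ * nn δ₁ * nn δ₂ := by
        have h1 := congrArg nn hcc
        rw [nn_mul, nn_mul, nn_mul, nn_mul, nn_unit hu₀, nn_unit hu₁, nn_unit hu₂,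
          nn_unit hu] at h1
        have h2 : nn ((δ₀ * δ₁ * δ₂) ^ 3) = (nn δ₀ * nn δ₁ * nn δ₂) ^ 3 := by
          rw [show (δ₀ * δ₁ * δ₂) ^ 3 = (δ₀*δ₁*δ₂)*(δ₀*δ₁*δ₂)*(δ₀*δ₁*δ₂) from by ring,
            nn_mul, nn_mul, nn_mul, nn_mul]
          ring
        have h3 : nn (c₁ ^ 3) = nn c₁ ^ 3 := by
          rw [show c₁ ^ 3 = c₁*c₁*c₁ from by ring, nn_mul, nn_mul]; ring
        rw [h2, h3] at h1
        have := Nat.pow_left_injective (by norm_num : 3 ≠ 0)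
          (by omega : (nn δ₀ * nn δ₁ * nn δ₂) ^ 3 = nn c₁ ^ 3)
        omega
      have hlt : nn δ₀ < nn c := by
        have h1 : nn c = 3 * nn c₁ := by rw [hc₁, nn_mul, nn_lam]
        have h2 : 0 < nn δ₁ * nn δ₂ := Nat.mul_pos (nn_pos hδ₁0) (nn_pos hδ₂0)
        have h3 : nn δ₀ ≤ nn c₁ := by
          calc nn δ₀ ≤ nn δ₀ * (nn δ₁ * nn δ₂) := Nat.le_mul_of_pos_right _ h2
          _ = nn c₁ := by rw [hnnc₁]; ring
        have h4 : 0 < nn c₁ := nn_pos hc₁0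
        omega
      rcases hs₁ with rfl | rfl <;> rcases hs₂ with rfl | rfl
      · exact ⟨δ₀, δ₁, -δ₂, -(u₀ * w), (hu₀.mul hwu).neg, hδ₀0, hlt,
          by linear_combination w * t2 + (δ₂ ^ 3 - δ₁ ^ 3) * hw⟩
      · exact ⟨δ₀, δ₁, δ₂, -(u₀ * w), (hu₀.mul hwu).neg, hδ₀0, hlt,
          by linear_combination w * t2 - (δ₁ ^ 3 + δ₂ ^ 3) * hw⟩
      · exact ⟨δ₀, δ₁, δ₂, u₀ * w, hu₀.mul hwu, hδ₀0, hlt,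
          by linear_combination (-w) * t2 - (δ₁ ^ 3 + δ₂ ^ 3) * hw⟩
      · exact ⟨δ₀, δ₁, -δ₂, u₀ * w, hu₀.mul hwu, hδ₀0, hlt,
          by linear_combination (-w) * t2 - (δ₁ ^ 3 - δ₂ ^ 3) * hw⟩
    · -- P ∣ g₁ : impossible
      exfalso
      obtain ⟨e, he⟩ := hPg₁
      have hedvd : e ∣ g₁ := ⟨P, by rw [he]; ring⟩
      have hce0 : IsCoprime e g₀ := hcg01.symm.of_isCoprime_of_dvd_left hedvd
      have hce2 : IsCoprime e g₂ := hcg12.of_isCoprime_of_dvd_left hedvd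
      have hprod : e * (g₀ * g₂) = u * c₁ ^ 3 := by
        apply mul_left_cancel₀ hP0
        calc P * (e * (g₀ * g₂)) = g₀ * g₁ * g₂ := by rw [he]; ring
        _ = u * P * c₁ ^ 3 := hprodg
        _ = P * (u * c₁ ^ 3) := by ring
      obtain ⟨δ₀, u₀, hu₀, hδ₀⟩ := cube_extract hu (hce0.symm.mul_right hcg02)
        (show g₀ * (e * g₂) = u * c₁ ^ 3 from by linear_combination hprod)
      obtain ⟨δ₁, u₁, hu₁, hδ₁⟩ := cube_extract hu (hce0.mul_right hce2) hprod
      obtain ⟨δ₂, u₂, hu₂, hδ₂⟩ := cube_extract hu (hce2.symm.mul_right hcg02.symm)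
        (show g₂ * (e * g₀) = u * c₁ ^ 3 from by linear_combination hprod)
      have hδ₁l : ¬ lam ∣ δ₁ := fun h => hg₁l (by
        rw [he, hδ₁]
        exact ((h.trans (dvd_pow_self δ₁ (by norm_num))).mul_left u₁).mul_left P)
      have hδ₂l : ¬ lam ∣ δ₂ := fun h => hg₂l (by
        rw [hδ₂]; exact (h.trans (dvd_pow_self δ₂ (by norm_num))).mul_left u₂)
      have hg₀3 : lam ^ 3 ∣ g₀ := by
        have h1 : lam ∣ δ₀ := by
          rw [hδ₀] at hg₀l
          rcases lam_prime.dvd_mul.mp hg₀l with h' | h'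
          · exact absurd (isUnit_of_dvd_unit h' hu₀) lam_prime.not_unit
          · exact lam_prime.dvd_of_dvd_pow h'
        rw [hδ₀]
        exact ((pow_dvd_pow_of_dvd h1 3).mul_left u₀)
      obtain ⟨s₁, hs₁, h9δ₁⟩ := cube_resid hδ₁l
      obtain ⟨s₂, hs₂, h9δ₂⟩ := cube_resid hδ₂l
      have hgsum' : g₀ + ω * (P * (u₁ * δ₁ ^ 3)) + ω ^ 2 * (u₂ * δ₂ ^ 3) = 0 := by
        rw [← hδ₁, ← hδ₂, ← he]
        exact hgsum
      have h3sum : lam ^ 3 ∣ P * (ω * (u₁ * s₁)) + ω ^ 2 * (u₂ * s₂) := by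
        have key : P * (ω * (u₁ * s₁)) + ω ^ 2 * (u₂ * s₂) =
            -g₀ - ω * P * u₁ * (δ₁ ^ 3 - s₁) - ω ^ 2 * u₂ * (δ₂ ^ 3 - s₂) := by
          linear_combination hgsum'
        rw [key]
        refine dvd_sub (dvd_sub ?_ ?_) ?_
        · exact dvd_neg.mpr hg₀3
        · exact (dvd_trans (pow_dvd_pow lam (by norm_num)) (nine_dvd_iff_lam4.mp h9δ₁)).mul_left _
        · exact (dvd_trans (pow_dvd_pow lam (by norm_num)) (nine_dvd_iff_lam4.mp h9δ₂)).mul_left _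
      have hω2u : IsUnit (ω ^ 2 * (u₂ * s₂)) := (isUnit_omega.pow 2).mul (hu₂.mul (sign_unit hs₂))
      obtain ⟨v, hv⟩ := hω2u.exists_right_inv
      have hvu : IsUnit v := IsUnit.of_mul_eq_one _ (by rw [mul_comm]; exact hv)
      refine no_unit_p hp9 ((isUnit_omega.mul (hu₁.mul (sign_unit hs₁))).mul hvu) ?_
      have key2 : (pz : Eis) * (ω * (u₁ * s₁) * v) + 1 =
          (P * (ω * (u₁ * s₁)) + ω ^ 2 * (u₂ * s₂)) * v := by
        rw [hPdef]
        linear_combination -hv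
      rw [key2]
      exact h3sum.mul_right v
  · -- P ∣ g₂ : impossible
    exfalso
    obtain ⟨e, he⟩ := hPg₂
    have hedvd : e ∣ g₂ := ⟨P, by rw [he]; ring⟩
    have hce0 : IsCoprime e g₀ := hcg02.symm.of_isCoprime_of_dvd_left hedvd
    have hce1 : IsCoprime e g₁ := hcg12.symm.of_isCoprime_of_dvd_left hedvd
    have hprod : e * (g₀ * g₁) = u * c₁ ^ 3 := by
      apply mul_left_cancel₀ hP0
      calc P * (e * (g₀ * g₁)) = g₀ * g₁ * g₂ := by rw [he]; ring
      _ = u * P * c₁ ^ 3 := hprodg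
      _ = P * (u * c₁ ^ 3) := by ring
    obtain ⟨δ₀, u₀, hu₀, hδ₀⟩ := cube_extract hu (hce0.symm.mul_right hcg01)
      (show g₀ * (e * g₁) = u * c₁ ^ 3 from by linear_combination hprod)
    obtain ⟨δ₁, u₁, hu₁, hδ₁⟩ := cube_extract hu (hce1.symm.mul_right hcg01.symm)
      (show g₁ * (e * g₀) = u * c₁ ^ 3 from by linear_combination hprod)
    obtain ⟨δ₂, u₂, hu₂, hδ₂⟩ := cube_extract hu (hce0.mul_right hce1) hprod
    have hδ₁l : ¬ lam ∣ δ₁ := fun h => hg₁l (by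
      rw [hδ₁]; exact (h.trans (dvd_pow_self δ₁ (by norm_num))).mul_left u₁)
    have hδ₂l : ¬ lam ∣ δ₂ := fun h => hg₂l (by
      rw [he, hδ₂]
      exact ((h.trans (dvd_pow_self δ₂ (by norm_num))).mul_left u₂).mul_left P)
    have hg₀3 : lam ^ 3 ∣ g₀ := by
      have h1 : lam ∣ δ₀ := by
        rw [hδ₀] at hg₀l
        rcases lam_prime.dvd_mul.mp hg₀l with h' | h'
        · exact absurd (isUnit_of_dvd_unit h' hu₀) lam_prime.not_unit
        · exact lam_prime.dvd_of_dvd_pow h'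
      rw [hδ₀]
      exact ((pow_dvd_pow_of_dvd h1 3).mul_left u₀)
    obtain ⟨s₁, hs₁, h9δ₁⟩ := cube_resid hδ₁l
    obtain ⟨s₂, hs₂, h9δ₂⟩ := cube_resid hδ₂l
    have hgsum' : g₀ + ω * (u₁ * δ₁ ^ 3) + ω ^ 2 * (P * (u₂ * δ₂ ^ 3)) = 0 := by
      rw [← hδ₁, ← hδ₂, ← he]
      exact hgsum
    have h3sum : lam ^ 3 ∣ ω * (u₁ * s₁) + P * (ω ^ 2 * (u₂ * s₂)) := by
      have key : ω * (u₁ * s₁) + P * (ω ^ 2 * (u₂ * s₂)) =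
          -g₀ - ω * u₁ * (δ₁ ^ 3 - s₁) - ω ^ 2 * P * u₂ * (δ₂ ^ 3 - s₂) := by
        linear_combination hgsum'
      rw [key]
      refine dvd_sub (dvd_sub ?_ ?_) ?_
      · exact dvd_neg.mpr hg₀3
      · exact (dvd_trans (pow_dvd_pow lam (by norm_num)) (nine_dvd_iff_lam4.mp h9δ₁)).mul_left _
      · exact (dvd_trans (pow_dvd_pow lam (by norm_num)) (nine_dvd_iff_lam4.mp h9δ₂)).mul_left _
    have hωu : IsUnit (ω * (u₁ * s₁)) := isUnit_omega.mul (hu₁.mul (sign_unit hs₁))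
    obtain ⟨v, hv⟩ := hωu.exists_right_inv
    have hvu : IsUnit v := IsUnit.of_mul_eq_one _ (by rw [mul_comm]; exact hv)
    refine no_unit_p hp9 (((isUnit_omega.pow 2).mul (hu₂.mul (sign_unit hs₂))).mul hvu) ?_
    have key2 : (pz : Eis) * (ω ^ 2 * (u₂ * s₂) * v) + 1 =
        (ω * (u₁ * s₁) + P * (ω ^ 2 * (u₂ * s₂))) * v := by
      rw [hPdef]
      linear_combination -hv
    rw [key2]
    exact h3sum.mul_right v


theorem no_solution {pz : ℤ} (hp9 : pz % 9 = 2 ∨ pz % 9 = 5) (hp5 : 5 ≤ pz)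
    (hP : Prime ((pz : ℤ) : Eis)) :
    ∀ (N : ℕ) (c a b u : Eis), IsUnit u → nn c ≤ N → c ≠ 0 →
      a ^ 3 + b ^ 3 = u * ((pz : ℤ) : Eis) * c ^ 3 → False := by
  intro N
  induction N using Nat.strong_induction_on with
  | _ N ih =>
  intro c a b u hu hcN hc0 heq
  set P : Eis := ((pz : ℤ) : Eis) with hPdef
  have hP0 : P ≠ 0 := hP.ne_zero
  by_cases hco : IsCoprime a b
  · -- coprime case
    have hid : ω ^ 2 + ω + 1 = 0 := by decide
    have hlam : lam = ω - 1 := by decide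
    have hω3' : ω ^ 3 = 1 := hω3
    have hfactor : (a + b) * (a + ω * b) * (a + ω ^ 2 * b) = u * P * c ^ 3 := by
      linear_combination heq + (a ^ 2 * b + a * b ^ 2 * ω + b ^ 3 * (ω - 1)) * hid
    have happly : ∀ A B C w : Eis, IsUnit w → A ≠ 0 → nn A < nn c →
        B ^ 3 + C ^ 3 = w * P * A ^ 3 → False := by
      intro A B C w hw hA0 hlt heq'
      exact ih (nn A) (lt_of_lt_of_le hlt hcN) A B C w hw le_rfl hA0 heq'
    by_cases hlc : lam ∣ c
    · -- lam divides c: find the heavy factor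
      have hl₀f : lam ∣ a + b := by
        by_contra h
        have h1 : ¬ lam ∣ a + ω * b := by
          intro h'
          apply h
          have hrw : a + b = (a + ω * b) - lam * b := by linear_combination b * hlam
          rw [hrw]; exact dvd_sub h' (dvd_mul_right _ _)
        have h2 : ¬ lam ∣ a + ω ^ 2 * b := by
          intro h'
          apply h
          have hrw : a + b = (a + ω ^ 2 * b) - lam * ((ω + 1) * b) := by
            linear_combination ((ω + 1) * b) * hlam
          rw [hrw]; exact dvd_sub h' (dvd_mul_right _ _)
        have h3 : lam ∣ (a + b) * (a + ω * b) * (a + ω ^ 2 * b) := by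
          rw [hfactor]
          exact (hlc.trans (dvd_pow_self c (by norm_num))).mul_left (u * P)
        rcases lam_prime.dvd_mul.mp h3 with h4 | h4
        · rcases lam_prime.dvd_mul.mp h4 with h5 | h5
          · exact h h5
          · exact h1 h5
        · exact h2 h4
      have hla : ¬ lam ∣ a := by
        intro h
        have hb : lam ∣ b := (dvd_add_right h).mp hl₀f
        exact lam_prime.not_unit (hco.isUnit_of_dvd' h hb)
      have hlb : ¬ lam ∣ b := by
        intro h
        have ha : lam ∣ a := by
          have : a = (a + b) - b := by ring
          rw [this]; exact dvd_sub hl₀f h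
        exact lam_prime.not_unit (hco.isUnit_of_dvd' ha h)
      obtain ⟨c₁, hc₁⟩ := hlc
      obtain ⟨sa, hsa, h9a⟩ := cube_resid hla
      obtain ⟨sb, hsb, h9b⟩ := cube_resid hlb
      have h4c : lam ^ 4 ∣ u * P * c ^ 3 := by
        rw [← heq]
        have hkey : a ^ 3 + b ^ 3 = (a ^ 3 - sa) + (b ^ 3 - sb) + (sa + sb) := by ring
        have h3c3 : lam ^ 3 ∣ c ^ 3 := by
          rw [hc₁, mul_pow]
          exact (pow_dvd_pow lam (by norm_num)).mul_right _
        have h2 : lam ^ 3 ∣ sa + sb := by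
          have : sa + sb = (a ^ 3 + b ^ 3) - (a ^ 3 - sa) - (b ^ 3 - sb) := by ring
          rw [this, heq]
          refine dvd_sub (dvd_sub ?_ ?_) ?_
          · exact h3c3.mul_left (u * P)
          · exact dvd_trans (pow_dvd_pow lam (by norm_num)) (nine_dvd_iff_lam4.mp h9a)
          · exact dvd_trans (pow_dvd_pow lam (by norm_num)) (nine_dvd_iff_lam4.mp h9b)
        have hsum0 : sa + sb = 0 := by
          rcases hsa with rfl | rfl <;> rcases hsb with rfl | rfl
          · exfalso
            have h3 := nrm_dvd h2
            rw [show nrm (lam ^ 3) = 27 from by decide,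
              show nrm ((1 : Eis) + 1) = 4 from by decide] at h3
            omega
          · ring
          · ring
          · exfalso
            have h3 := nrm_dvd h2
            rw [show nrm (lam ^ 3) = 27 from by decide,
              show nrm ((-1 : Eis) + -1) = 4 from by decide] at h3
            omega
        rw [hkey, hsum0, add_zero]
        exact dvd_add (nine_dvd_iff_lam4.mp h9a) (nine_dvd_iff_lam4.mp h9b)
      have h4c' : lam ^ 4 ∣ c ^ 3 := by
        have hlamP : ¬ lam ∣ P := by rw [hPdef, lam_dvd_int]; omega
        have hnl : ¬ lam ∣ u * P := by
          intro h
          rcases lam_prime.dvd_mul.mp h with h' | h'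
          · exact lam_prime.not_unit (isUnit_of_dvd_unit h' hu)
          · exact hlamP h'
        exact lam_prime.pow_dvd_of_dvd_mul_left 4 hnl h4c
      have hlc₁ : lam ∣ c₁ := by
        rw [hc₁, mul_pow] at h4c'
        obtain ⟨t, ht⟩ := h4c'
        have h1 : lam ^ 3 * c₁ ^ 3 = lam ^ 3 * (lam * t) := by rw [ht]; ring
        have h2 := mul_left_cancel₀ (pow_ne_zero 3 lam_ne_zero) h1
        exact lam_prime.dvd_of_dvd_pow (h2 ▸ dvd_mul_right lam t : lam ∣ c₁ ^ 3)
      obtain ⟨g₀, hg₀⟩ := hl₀f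
      have hl₁f : lam ∣ a + ω * b := by
        have hrw : a + ω * b = (a + b) + lam * b := by linear_combination (-b) * hlam
        rw [hrw]; exact dvd_add ⟨g₀, hg₀⟩ (dvd_mul_right _ _)
      obtain ⟨g₁, hg₁⟩ := hl₁f
      have hl₂f : lam ∣ a + ω ^ 2 * b := by
        have hrw : a + ω ^ 2 * b = (a + b) + lam * ((ω + 1) * b) := by
          linear_combination (-(ω + 1) * b) * hlam
        rw [hrw]; exact dvd_add ⟨g₀, hg₀⟩ (dvd_mul_right _ _)
      obtain ⟨g₂, hg₂⟩ := hl₂f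
      have hprodg : g₀ * g₁ * g₂ = u * P * c₁ ^ 3 := by
        apply mul_left_cancel₀ (pow_ne_zero 3 lam_ne_zero)
        calc lam ^ 3 * (g₀ * g₁ * g₂) = (lam * g₀) * (lam * g₁) * (lam * g₂) := by ring
        _ = (a + b) * (a + ω * b) * (a + ω ^ 2 * b) := by rw [← hg₀, ← hg₁, ← hg₂]
        _ = u * P * c ^ 3 := hfactor
        _ = lam ^ 3 * (u * P * c₁ ^ 3) := by rw [hc₁]; ring
      have hgdvd : lam ∣ g₀ * g₁ * g₂ := by
        rw [hprodg]
        exact ((hlc₁.trans (dvd_pow_self c₁ (by norm_num))).mul_left (u * P))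
      rcases lam_prime.dvd_mul.mp hgdvd with h01 | hg2h
      · rcases lam_prime.dvd_mul.mp h01 with hg0h | hg1h
        · -- heavy at position 0
          have hheavy : lam ^ 2 ∣ a + b := by
            obtain ⟨t, ht⟩ := hg0h
            exact ⟨t, by rw [hg₀, ht]; ring⟩
          obtain ⟨A, B, C, w, hw, hA0, hlt, heq'⟩ :=
            caseII hp9 hP hu hco hc0 ⟨c₁, hc₁⟩ heq hheavy
          exact happly A B C w hw hA0 hlt heq'
        · -- heavy at position 1 : use b' = ω * b
          have hco' : IsCoprime a (ω * b) := (isCoprime_isUnit_right isUnit_omega).mul_right hco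
          have heq' : a ^ 3 + (ω * b) ^ 3 = u * P * c ^ 3 := by
            rw [mul_pow, hω3', one_mul]; exact heq
          have hheavy : lam ^ 2 ∣ a + ω * b := by
            obtain ⟨t, ht⟩ := hg1h
            exact ⟨t, by rw [hg₁, ht]; ring⟩
          obtain ⟨A, B, C, w, hw, hA0, hlt, heq''⟩ :=
            caseII hp9 hP hu hco' hc0 ⟨c₁, hc₁⟩ heq' hheavy
          exact happly A B C w hw hA0 hlt heq''
      · -- heavy at position 2 : use b' = ω ^ 2 * b
        have hco' : IsCoprime a (ω ^ 2 * b) :=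
          (isCoprime_isUnit_right (isUnit_omega.pow 2)).mul_right hco
        have heq' : a ^ 3 + (ω ^ 2 * b) ^ 3 = u * P * c ^ 3 := by
          rw [mul_pow, ← pow_mul, show 2 * 3 = 3 * 2 from rfl, pow_mul, hω3', one_pow, one_mul]
          exact heq
        have hheavy : lam ^ 2 ∣ a + ω ^ 2 * b := by
          obtain ⟨t, ht⟩ := hg2h
          exact ⟨t, by rw [hg₂, ht]; ring⟩
        obtain ⟨A, B, C, w, hw, hA0, hlt, heq''⟩ :=
          caseII hp9 hP hu hco' hc0 ⟨c₁, hc₁⟩ heq' hheavy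
        exact happly A B C w hw hA0 hlt heq''
    · -- lam does not divide c
      have hp5' : 5 ≤ pz := hp5
      have hPdvd : P ∣ (a + b) * (a + ω * b) * (a + ω ^ 2 * b) := by
        rw [hfactor]; exact ⟨u * c ^ 3, by ring⟩
      rcases hP.dvd_mul.mp hPdvd with h01 | hp2
      · rcases hP.dvd_mul.mp h01 with hp0 | hp1
        · obtain ⟨A, B, C, w, hw, hA0, hlt, heq'⟩ :=
            caseI hp9 hp5 hP hu hco hc0 hlc heq hp0
          exact happly A B C w hw hA0 hlt heq'
        · have hco' : IsCoprime a (ω * b) := (isCoprime_isUnit_right isUnit_omega).mul_right hco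
          have heq' : a ^ 3 + (ω * b) ^ 3 = u * P * c ^ 3 := by
            rw [mul_pow, hω3', one_mul]; exact heq
          obtain ⟨A, B, C, w, hw, hA0, hlt, heq''⟩ :=
            caseI hp9 hp5 hP hu hco' hc0 hlc heq' hp1
          exact happly A B C w hw hA0 hlt heq''
      · have hco' : IsCoprime a (ω ^ 2 * b) :=
          (isCoprime_isUnit_right (isUnit_omega.pow 2)).mul_right hco
        have heq' : a ^ 3 + (ω ^ 2 * b) ^ 3 = u * P * c ^ 3 := by
          rw [mul_pow, ← pow_mul, show 2 * 3 = 3 * 2 from rfl, pow_mul, hω3', one_pow, one_mul]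
          exact heq
        obtain ⟨A, B, C, w, hw, hA0, hlt, heq''⟩ :=
          caseI hp9 hp5 hP hu hco' hc0 hlc heq' hp2
        exact happly A B C w hw hA0 hlt heq''
  · -- not coprime: descend by common prime factor
    have hab0 : ¬ (a = 0 ∧ b = 0) := by
      rintro ⟨rfl, rfl⟩
      have h0 : u * P * c ^ 3 = 0 := by rw [← heq]; ring
      rcases mul_eq_zero.mp h0 with h | h
      · rcases mul_eq_zero.mp h with h' | h'
        · exact hu.ne_zero h'
        · exact hP0 h'
      · exact hc0 (pow_eq_zero_iff (by norm_num) |>.mp h)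
    have hex : ∃ z : Eis, Prime z ∧ z ∣ a ∧ z ∣ b := by
      by_contra hnex
      push_neg at hnex
      exact hco (isCoprime_of_prime_dvd hab0 hnex)
    obtain ⟨q, hq, hqa, hqb⟩ := hex
    have hqc : q ∣ c := by
      by_contra hqc
      have h3 : q ^ 3 ∣ u * P * c ^ 3 := by
        rw [← heq]
        exact dvd_add (pow_dvd_pow_of_dvd hqa 3) (pow_dvd_pow_of_dvd hqb 3)
      have hq1 : q ∣ u * P * c ^ 3 := (dvd_pow_self q (by norm_num)).trans h3
      have hqP : q ∣ P := by
        rcases hq.dvd_mul.mp hq1 with h' | h'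
        · rcases hq.dvd_mul.mp h' with h'' | h''
          · exact absurd (isUnit_of_dvd_unit h'' hu) hq.not_unit
          · exact h''
        · exact absurd (hq.dvd_of_dvd_pow h') hqc
      have hassoc : Associated q P := hq.associated_of_dvd hP hqP
      have hPa : P ∣ a := (hassoc.symm.dvd).trans hqa
      have hPb : P ∣ b := (hassoc.symm.dvd).trans hqb
      have h4 : P ^ 3 ∣ u * P * c ^ 3 := by
        rw [← heq]
        exact dvd_add (pow_dvd_pow_of_dvd hPa 3) (pow_dvd_pow_of_dvd hPb 3)
      obtain ⟨t, ht⟩ := h4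
      have h5 : P ∣ c ^ 3 := by
        have h6 : P * (u * c ^ 3) = P * (P ^ 2 * t) := by
          rw [show P * (u * c ^ 3) = u * P * c ^ 3 from by ring, ht]; ring
        have h7 := mul_left_cancel₀ hP0 h6
        have h8 : P ∣ u * c ^ 3 := by rw [h7]; exact ⟨P * t, by ring⟩
        rcases hP.dvd_mul.mp h8 with h' | h'
        · exact absurd (isUnit_of_dvd_unit h' hu) hP.not_unit
        · exact h'
      exact hqc (hassoc.dvd.trans (hP.dvd_of_dvd_pow h5))
    obtain ⟨a', rfl⟩ := hqa
    obtain ⟨b', rfl⟩ := hqb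
    obtain ⟨c', rfl⟩ := hqc
    have heq' : a' ^ 3 + b' ^ 3 = u * P * c' ^ 3 := by
      apply mul_left_cancel₀ (pow_ne_zero 3 hq.ne_zero)
      linear_combination heq
    have hc'0 : c' ≠ 0 := fun h => hc0 (by rw [h, mul_zero])
    have h2q : 2 ≤ nn q := by
      have h1 : nn q ≠ 1 := fun h =>
        hq.not_unit (isUnit_iff_nrm.mpr (by rw [nrm_eq_nn, h]; rfl))
      have h0 := nn_pos hq.ne_zero
      omega
    have hlt : nn c' < nn (q * c') := by
      rw [nn_mul]
      exact (Nat.lt_mul_iff_one_lt_left (nn_pos hc'0)).mpr (by omega)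
    exact ih (nn c') (lt_of_lt_of_le hlt hcN) c' a' b' u hu le_rfl hc'0 heq'

theorem sylvester_int (p : ℕ) (hp : p.Prime) (hodd : Odd p)
    (h9 : p % 9 = 2 ∨ p % 9 = 5) :
    ∀ x y z : ℤ, z ≠ 0 → x ^ 3 + y ^ 3 = (p : ℤ) * z ^ 3 → False := by
  intro x y z hz heq
  have hp9 : (p : ℤ) % 9 = 2 ∨ (p : ℤ) % 9 = 5 := by omega
  have hp5 : 5 ≤ (p : ℤ) := by
    have h2 := hp.two_le
    have ho := Nat.odd_iff.mp hodd
    omega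
  have hP : Prime (((p : ℤ) : ℤ) : Eis) := prime_nat_eis hp (by omega)
  have hz' : ((z : ℤ) : Eis) ≠ 0 := by
    intro h
    exact hz (intCast_injective (h.trans (by ext <;> simp)))
  have heq' : ((x : ℤ) : Eis) ^ 3 + ((y : ℤ) : Eis) ^ 3 =
      1 * (((p : ℤ) : ℤ) : Eis) * ((z : ℤ) : Eis) ^ 3 := by
    have hcast := congrArg (fun n : ℤ => (n : Eis)) heq
    push_cast at hcast
    linear_combination hcast
  exact no_solution hp9 hp5 hP (nn ((z : ℤ) : Eis)) _ _ _ 1 isUnit_one le_rfl hz' heq'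


theorem sylvester_rat (p : ℕ) (hp : p.Prime) (hodd : Odd p)
    (h9 : p % 9 = 2 ∨ p % 9 = 5) : ¬ ∃ a b : ℚ, a ^ 3 + b ^ 3 = (p : ℚ) := by
  rintro ⟨a, b, hab⟩
  have hda : ((a.den : ℚ)) ≠ 0 := Nat.cast_ne_zero.mpr a.den_nz
  have hdb : ((b.den : ℚ)) ≠ 0 := Nat.cast_ne_zero.mpr b.den_nz
  have ha' : (a.num : ℚ) = a * a.den := by
    nth_rewrite 2 [← Rat.num_div_den a]
    field_simp
  have hb' : (b.num : ℚ) = b * b.den := by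
    nth_rewrite 2 [← Rat.num_div_den b]
    field_simp
  have hz : ((a.den : ℤ)) * (b.den : ℤ) ≠ 0 :=
    mul_ne_zero (Int.natCast_ne_zero.mpr a.den_nz) (Int.natCast_ne_zero.mpr b.den_nz)
  have key : ((a.num * b.den) ^ 3 + (b.num * a.den) ^ 3 : ℤ) =
      (p : ℤ) * ((a.den : ℤ) * b.den) ^ 3 := by
    have : (((a.num * b.den) ^ 3 + (b.num * a.den) ^ 3 : ℤ) : ℚ) =
        (((p : ℤ) * ((a.den : ℤ) * b.den) ^ 3 : ℤ) : ℚ) := by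
      push_cast
      rw [ha', hb']
      linear_combination ((a.den : ℚ) * b.den) ^ 3 * hab
    exact_mod_cast this
  exact sylvester_int p hp hodd h9 _ _ _ hz key

end Eis

open WeierstrassCurve.Affine TensorProduct
open scoped WeierstrassCurve

/-- The Mordell curve `y² = x³ + k` over `ℚ`. -/
def mordell (k : ℚ) : WeierstrassCurve.Affine ℚ :=
  { a₁ := 0, a₂ := 0, a₃ := 0, a₄ := 0, a₆ := k }

/-- The Mordell--Weil rank of `W` over `K`, i.e. `dim_ℚ (W(K) ⊗ ℚ)`. -/
noncomputable def mwRank (W : WeierstrassCurve.Affine ℚ) (K : Type) [Field K] [Algebra ℚ K] : ℕ :=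
  letI : DecidableEq K := Classical.decEq K
  Module.finrank ℚ (ℚ ⊗[ℤ] (W.baseChange K).Point)

/-- Sylvester: an odd prime `p ≡ 2, 5 (mod 9)` is not a sum of two rational cubes;
equivalently `y² = x³ - 432p²` has Mordell--Weil rank `0` over `ℚ`. -/
theorem prime_two_five_mod_nine_not_cubeSum (p : ℕ) (hp : p.Prime) (hodd : Odd p)
    (h9 : p % 9 = 2 ∨ p % 9 = 5) :
    (¬ ∃ a b : ℚ, a ^ 3 + b ^ 3 = (p : ℚ)) ∧
      mwRank (mordell (-432 * (p : ℚ) ^ 2)) ℚ = 0 := by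
  have hmain : ¬ ∃ a b : ℚ, a ^ 3 + b ^ 3 = (p : ℚ) := Eis.sylvester_rat p hp hodd h9
  refine ⟨hmain, ?_⟩
  have hpts : ∀ P : ((mordell (-432 * (p : ℚ) ^ 2)).baseChange ℚ).Point, P = 0 := by
    intro P
    cases P with
    | zero => rfl
    | @some x y h =>
      exfalso
      apply hmain
      have heq := h.1
      rw [WeierstrassCurve.Affine.equation_iff] at heq
      simp only [WeierstrassCurve.baseChange, mordell, WeierstrassCurve.map_a₁,
        WeierstrassCurve.map_a₂, WeierstrassCurve.map_a₃, WeierstrassCurve.map_a₄,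
        WeierstrassCurve.map_a₆, Algebra.algebraMap_self_apply, map_neg, map_mul, map_pow,
        map_ofNat, Rat.cast_natCast] at heq
      -- heq : y ^ 2 = x ^ 3 + -432 * p ^ 2 (up to simp normal form)
      have hp0 : (0 : ℚ) < (p : ℚ) := by exact_mod_cast hp.pos
      have hx : x ≠ 0 := by
        intro h0
        rw [h0] at heq
        nlinarith [sq_nonneg y, sq_nonneg ((p : ℚ))]
      refine ⟨(36 * p + y) / (6 * x), (36 * p - y) / (6 * x), ?_⟩
      have h6x : (6 : ℚ) * x ≠ 0 := by
        intro h'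
        exact hx (by linarith [mul_eq_zero.mp h'] )
      rw [div_pow, div_pow, ← add_div, div_eq_iff (pow_ne_zero 3 h6x)]
      linear_combination (216 * (p : ℚ)) * heq
  have hsub : Subsingleton (((mordell (-432 * (p : ℚ) ^ 2)).baseChange ℚ).Point) :=
    ⟨fun P Q => (hpts P).trans (hpts Q).symm⟩
  have hsub2 : Subsingleton (ℚ ⊗[ℤ] ((mordell (-432 * (p : ℚ) ^ 2)).baseChange ℚ).Point) := by
    constructor
    intro s t
    have hzero : ∀ r : ℚ ⊗[ℤ] ((mordell (-432 * (p : ℚ) ^ 2)).baseChange ℚ).Point, r = 0 := by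
      intro r
      induction r using TensorProduct.induction_on with
      | zero => rfl
      | tmul q m => rw [Subsingleton.elim m 0, tmul_zero]
      | add x y hx hy => rw [hx, hy, add_zero]
    rw [hzero s, hzero t]
  exact Module.finrank_zero_of_subsingleton
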